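/- arXiv:1606.00853 — 5 statements merged into one kernel-verified Lean document; each statement's English description precedes it below -/
import Mathlib

section
/- Let P be a convex integer polygon containing both the point (0,0) and the point (0, ℓ(P)), where ℓ(P) is the lattice diameter of P. Then P lies in the slab |x₁| ≤ ℓ(P) + 2, and no integer point lying on either of the lines x₁ = ℓ(P) + 1 or x₁ = −(ℓ(P) + 1) belongs to P. -/
open Set

/-- The point of `ℝ²` corresponding to an integer point. -/
def intPt (p : ℤ × ℤ) : ℝ × ℝ := ((p.1 : ℝ), (p.2 : ℝ))

/-- A convex integer polygon: the convex hull of a finite set of integer points,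
with nonempty interior. -/
def IsConvexIntegerPolygon (P : Set (ℝ × ℝ)) : Prop :=
  ∃ V : Finset (ℤ × ℤ), P = convexHull ℝ (intPt '' ↑V) ∧ (interior P).Nonempty

/-- A line in the plane. -/
def IsLine (L : Set (ℝ × ℝ)) : Prop :=
  ∃ a b c : ℝ, ¬(a = 0 ∧ b = 0) ∧ L = {x : ℝ × ℝ | a * x.1 + b * x.2 = c}

/-- The set of integer points of the plane. -/
def intPts : Set (ℝ × ℝ) := {x : ℝ × ℝ | ∃ p : ℤ × ℤ, x = intPt p}

/-- The lattice diameter of `P` equals `ℓ`: the maximum over all lines `L` of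
`|P ∩ ℤ² ∩ L| - 1` is `ℓ`. -/
def LatticeDiamIs (P : Set (ℝ × ℝ)) (ℓ : ℕ) : Prop :=
  (∃ L, IsLine L ∧ (P ∩ intPts ∩ L).ncard = ℓ + 1) ∧
  ∀ L, IsLine L → (P ∩ intPts ∩ L).ncard ≤ ℓ + 1

/-!
The segment from `(0,0)` to `(0,ℓ)` lies in `P`. If a lattice point `p` with `|p₁| = ℓ + 1` were in
`P`, pick `0 ≤ k ≤ ℓ` with `k ≡ p₂ mod ℓ + 1`: the lattice segment from `(0,k)` to `p` would carry
`ℓ + 2` lattice points.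

If a lattice point `p` with `A = |p₁| ≥ ℓ + 3` were in `P`, the triangle `(0,0), (0,ℓ), p` meets the
line `|x₁| = ℓ + 1` in a vertical segment of length `ℓ (A - ℓ - 1) / A ≥ (A - 1) / A` whose endpoints
lie in `ℤ / A`, so it contains a lattice point, which is excluded by the first part. The length bound
fails only for `ℓ = 1`, and a lattice point is missed only when `A ∣ 2 p₂ - 1`; then `A` is odd and the
line through `(0, 1/2)` and `p` carries `(A + 1) / 2 ≥ 3` lattice points of `P`.

Finally `P` is the convex hull of lattice points, so the bound on its lattice points bounds `P`.
-/

lemma isometry_intPt : Isometry intPt := Real.isometry_intCast.prodMap Real.isometry_intCast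

lemma intPt_injective : Function.Injective intPt := isometry_intPt.injective

lemma intPts_eq_range : intPts = range intPt := by
  ext x; simp [intPts, eq_comm]

lemma nsmul_left_injective_of_ne_zero {M : Type*} [AddCommGroup M] [IsAddTorsionFree M] {d : M}
    (hd : d ≠ 0) : Function.Injective (fun j : ℕ => j • d) := fun _ _ h =>
  Nat.cast_injective (R := ℤ) (smul_left_injective ℤ hd (by simpa only [natCast_zsmul] using h))

section

variable {P : Set (ℝ × ℝ)} {ℓ : ℕ}

namespace IsConvexIntegerPolygon

lemma convex (hP : IsConvexIntegerPolygon P) : Convex ℝ P := by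
  obtain ⟨V, rfl, -⟩ := hP
  exact convex_convexHull ℝ _

lemma isBounded (hP : IsConvexIntegerPolygon P) : Bornology.IsBounded P := by
  obtain ⟨V, rfl, -⟩ := hP
  exact ((V.finite_toSet.image intPt).isCompact_convexHull ℝ).isBounded

lemma finite_inter_intPts (hP : IsConvexIntegerPolygon P) : (P ∩ intPts).Finite := by
  have hpre : (intPt ⁻¹' P).Finite := by
    simpa using Metric.finite_isBounded_inter_isClosed (s := univ) IsDiscrete.univ
      (isometry_intPt.antilipschitz.isBounded_preimage hP.isBounded) isClosed_univ
  rw [intPts_eq_range, ← image_preimage_eq_inter_range]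
  exact hpre.image intPt

lemma abs_fst_le_of_forall_intPt (hP : IsConvexIntegerPolygon P) {c : ℝ}
    (hc : ∀ p : ℤ × ℤ, intPt p ∈ P → |(p.1 : ℝ)| ≤ c) {x : ℝ × ℝ} (hx : x ∈ P) : |x.1| ≤ c := by
  obtain ⟨V, hPV, -⟩ := hP
  suffices P ⊆ LinearMap.fst ℝ ℝ ℝ ⁻¹' Icc (-c) c from abs_le.mpr (this hx)
  rw [hPV]
  refine convexHull_min ?_ ((convex_Icc _ _).linear_preimage _)
  rintro _ ⟨v, hv, rfl⟩
  exact abs_le.mp (hc v (hPV ▸ subset_convexHull ℝ _ ⟨v, hv, rfl⟩))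

end IsConvexIntegerPolygon

lemma Convex.intPt_add_nsmul_mem (hP : Convex ℝ P) {u d : ℤ × ℤ} {m j : ℕ}
    (hu : intPt u ∈ P) (hm : intPt (u + m • d) ∈ P) (hj : j ≤ m) : intPt (u + j • d) ∈ P := by
  rcases Nat.eq_zero_or_pos m with rfl | hm0
  · obtain rfl : j = 0 := by omega
    simpa using hu
  have hmR : (0 : ℝ) < m := by exact_mod_cast hm0
  have hcomb : intPt (u + j • d) = intPt u + ((j : ℝ) / m) • (intPt (u + m • d) - intPt u) := by
    ext <;> simp [intPt] <;> field_simp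
  rw [hcomb]
  exact hP.add_smul_sub_mem hu hm ⟨by positivity, div_le_one_of_le₀ (by exact_mod_cast hj) hmR.le⟩

lemma Convex.mk_mem_of_mem_of_mem (hP : Convex ℝ P) {x y₁ y₂ c : ℝ}
    (h₁ : (x, y₁) ∈ P) (h₂ : (x, y₂) ∈ P) (hc : c ∈ Icc y₁ y₂) : (x, c) ∈ P :=
  hP.segment_subset h₁ h₂ <| Prod.image_mk_segment_right (𝕜 := ℝ) x y₁ y₂ ▸
    ⟨c, (segment_eq_Icc (hc.1.trans hc.2)).symm ▸ hc, rfl⟩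

lemma Convex.mk_mem_of_mem_triangle (hP : Convex ℝ P) {w a b X A y : ℝ}
    (h₀ : ((0 : ℝ), (0 : ℝ)) ∈ P) (hw : ((0 : ℝ), w) ∈ P) (hab : (a, b) ∈ P)
    (hX : 0 ≤ X) (hXA : X < A) (hy₁ : X * b ≤ A * y) (hy₂ : A * y ≤ X * b + (A - X) * w) :
    (X / A * a, y) ∈ P := by
  have hA : 0 < A := by linarith
  have hAX : 0 < A - X := by linarith
  set c := (A * y - X * b) / (A - X)
  have hc : ((0 : ℝ), c) ∈ P := hP.mk_mem_of_mem_of_mem h₀ hw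
    ⟨div_nonneg (by linarith) hAX.le, by rw [div_le_iff₀ hAX]; linarith⟩
  have hcomb := hP hc hab (a := (A - X) / A) (b := X / A) (by positivity) (by positivity)
    (by field_simp; ring)
  convert hcomb using 1
  ext
  · simp
  · simp [c]
    field_simp
    ring

lemma Convex.intPt_sign_mul_mem (hP : Convex ℝ P) (h₀ : intPt (0, 0) ∈ P)
    (hℓ : intPt (0, (ℓ : ℤ)) ∈ P) {p : ℤ × ℤ} (hpP : intPt p ∈ P) {X y : ℤ} (hX : 0 ≤ X)
    (hXA : X < |p.1|) (hy₁ : X * p.2 ≤ |p.1| * y) (hy₂ : |p.1| * y ≤ X * p.2 + (|p.1| - X) * ℓ) :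
    intPt (p.1.sign * X, y) ∈ P := by
  have h := hP.mk_mem_of_mem_triangle (by simpa [intPt] using h₀) (by simpa [intPt] using hℓ) hpP
    (X := X) (A := (|p.1| : ℤ)) (y := y) (by exact_mod_cast hX) (by exact_mod_cast hXA)
    (by exact_mod_cast hy₁) (by exact_mod_cast hy₂)
  convert h using 1
  have hA : ((|p.1| : ℤ) : ℝ) ≠ 0 := by
    have : (0 : ℤ) < |p.1| := by omega
    exact_mod_cast this.ne'
  have hp₁ : (p.1 : ℝ) = (p.1.sign : ℝ) * (|p.1| : ℤ) := by exact_mod_cast (Int.sign_mul_abs p.1).symm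
  simp only [intPt, Prod.mk.injEq, and_true]
  rw [hp₁]
  push_cast at hA ⊢
  field_simp

lemma LatticeDiamIs.le_of_forall_mem (hdiam : LatticeDiamIs P ℓ)
    (hfin : (P ∩ intPts).Finite) {u d : ℤ × ℤ} (hd : d ≠ 0) {m : ℕ}
    (hmem : ∀ j ≤ m, intPt (u + j • d) ∈ P) : m ≤ ℓ := by
  classical
  set L := {x : ℝ × ℝ | (d.2 : ℝ) * x.1 + (-d.1 : ℝ) * x.2 = d.2 * u.1 - d.1 * u.2}
  have hL : IsLine L := ⟨_, _, _, fun h => hd (Prod.ext (by exact_mod_cast neg_eq_zero.mp h.2)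
    (by exact_mod_cast h.1)), rfl⟩
  set S := (Finset.range (m + 1)).image (fun j : ℕ => intPt (u + j • d))
  have hS : S.card = m + 1 := by
    rw [Finset.card_image_of_injective _ fun _ _ h =>
      nsmul_left_injective_of_ne_zero hd (add_right_injective u (intPt_injective h)),
      Finset.card_range]
  have hSL : (S : Set (ℝ × ℝ)) ⊆ P ∩ intPts ∩ L := by
    intro x hx
    simp only [S, Finset.coe_image, Finset.coe_range, mem_image, mem_Iio] at hx
    obtain ⟨j, hj, rfl⟩ := hx
    refine ⟨⟨hmem j (by omega), _, rfl⟩, ?_⟩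
    simp [L, intPt]
    ring
  have := Set.ncard_le_ncard hSL (hfin.subset inter_subset_left)
  rw [Set.ncard_coe_finset, hS] at this
  linarith [hdiam.2 L hL]

lemma LatticeDiamIs.le_of_mem (hdiam : LatticeDiamIs P ℓ)
    (hP : IsConvexIntegerPolygon P) {u d : ℤ × ℤ} (hd : d ≠ 0) {m : ℕ}
    (hu : intPt u ∈ P) (hm : intPt (u + m • d) ∈ P) : m ≤ ℓ :=
  hdiam.le_of_forall_mem hP.finite_inter_intPts hd fun _ hj => hP.convex.intPt_add_nsmul_mem hu hm hj

lemma intPt_notMem_of_abs_fst_eq (hP : IsConvexIntegerPolygon P) (hdiam : LatticeDiamIs P ℓ)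
    (h₀ : intPt (0, 0) ∈ P) (hℓ : intPt (0, (ℓ : ℤ)) ∈ P) {p : ℤ × ℤ} (hp : |p.1| = ℓ + 1) :
    intPt p ∉ P := by
  intro hpP
  obtain ⟨k, hk⟩ : ∃ k : ℕ, (k : ℤ) = p.2 % (ℓ + 1) :=
    ⟨_, Int.toNat_of_nonneg (Int.emod_nonneg _ (by omega))⟩
  have hkℓ : k ≤ ℓ := by
    have := Int.emod_lt_of_pos p.2 (by omega : (0 : ℤ) < ℓ + 1)
    omega
  have hkP : intPt (0, k) ∈ P := by
    simpa using hP.convex.intPt_add_nsmul_mem (u := (0, 0)) (d := (0, 1)) h₀ (by simpa using hℓ) hkℓ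
  have hd : (p.1.sign, p.2 / (ℓ + 1)) ≠ 0 := fun h => by
    have h₁ : p.1 = 0 := Int.sign_eq_zero_iff_zero.mp (congrArg Prod.fst h)
    simp [h₁] at hp
    omega
  have := hdiam.le_of_mem hP hd (m := ℓ + 1) hkP <| by
    convert hpP using 2
    simp only [Prod.smul_mk, Prod.mk_add_mk, nsmul_eq_mul, zero_add, hk]
    push_cast
    rw [← hp, mul_comm, Int.sign_mul_abs, hp, Int.emod_add_mul_ediv]
  omega

lemma not_abs_fst_dvd_two_mul_snd_sub_one (hP : IsConvexIntegerPolygon P)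
    (hdiam : LatticeDiamIs P 1) (h₀ : intPt (0, 0) ∈ P) (h₁ : intPt (0, 1) ∈ P) {p : ℤ × ℤ}
    (hpP : intPt p ∈ P) (hA : 4 ≤ |p.1|) : ¬|p.1| ∣ 2 * p.2 - 1 := by
  rintro ⟨z, hz⟩
  have hodd : Odd (|p.1| * z) := hz ▸ ⟨p.2 - 1, by ring⟩
  obtain ⟨⟨m, hm⟩, ⟨s, rfl⟩⟩ := Int.odd_mul.mp hodd
  lift m to ℕ using (by omega)
  have hq : intPt (p.1.sign * 1, s + 1) ∈ P :=
    hP.convex.intPt_sign_mul_mem h₀ (by exact_mod_cast h₁) hpP (by norm_num) (by omega)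
      (by linarith) (by push_cast; linarith)
  have hd : (p.1.sign * 2, 2 * s + 1) ≠ 0 := fun h => by
    have := congrArg Prod.snd h
    simp at this
    omega
  have := hdiam.le_of_mem hP hd (m := m) hq <| by
    convert hpP using 2
    simp only [Prod.smul_mk, Prod.mk_add_mk, nsmul_eq_mul]
    have hp₁ : p.1 = p.1.sign * (2 * m + 1) := by rw [← hm, Int.sign_mul_abs]
    ext
    · linear_combination -hp₁
    · refine mul_left_cancel₀ (two_ne_zero (α := ℤ)) ?_
      linear_combination -hz - (2 * s + 1) * hm
  omega

lemma abs_fst_le_of_intPt_mem (hP : IsConvexIntegerPolygon P) (hdiam : LatticeDiamIs P ℓ)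
    (h₀ : intPt (0, 0) ∈ P) (hℓ : intPt (0, (ℓ : ℤ)) ∈ P) {p : ℤ × ℤ} (hpP : intPt p ∈ P) :
    |p.1| ≤ ℓ + 2 := by
  by_contra! hA
  have hp₁ : p.1 ≠ 0 := abs_pos.mp (by omega)
  rcases Nat.eq_zero_or_pos ℓ with rfl | hℓ₀
  · have := hdiam.le_of_mem hP (u := 0) (d := p) (m := 1) (fun h => hp₁ (by simp [h])) h₀
      (by simpa using hpP)
    omega
  obtain ⟨y, r, hy, hr₀, hrA⟩ : ∃ y r : ℤ, |p.1| * y = (ℓ + 1) * p.2 + r ∧ 0 ≤ r ∧ r < |p.1| :=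
    ⟨-(-((ℓ + 1) * p.2) / |p.1|), -((ℓ + 1) * p.2) % |p.1|,
      by linarith [Int.emod_add_mul_ediv (-((ℓ + 1) * p.2)) |p.1|],
      Int.emod_nonneg _ (by omega), Int.emod_lt_of_pos _ (by omega)⟩
  -- `y` is the lowest lattice height on the line `|x₁| = ℓ + 1` above the bottom edge of the
  -- triangle `(0,0), (0,ℓ), p`, and `r / |p.1|` its distance from that edge.
  by_cases hr : r ≤ (|p.1| - (ℓ + 1)) * ℓ
  · have := hP.convex.intPt_sign_mul_mem h₀ hℓ hpP (X := ℓ + 1) (y := y) (by omega) (by omega)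
      (by linarith) (by linarith)
    refine intPt_notMem_of_abs_fst_eq hP hdiam h₀ hℓ ?_ this
    rw [abs_mul, Int.abs_sign_of_ne_zero hp₁, one_mul, abs_of_nonneg (by omega)]
  · have hℓ₁ : ℓ = 1 := by
      by_contra hℓ₁
      have hℓ₂ : (2 : ℤ) ≤ ℓ := by omega
      have : |p.1| - 1 ≤ (|p.1| - (ℓ + 1)) * ℓ := by
        nlinarith [mul_nonneg (sub_nonneg.mpr hℓ₂) (by omega : (0 : ℤ) ≤ |p.1| - ℓ - 3)]
      omega
    subst hℓ₁
    refine not_abs_fst_dvd_two_mul_snd_sub_one hP hdiam h₀ (by simpa using hℓ) hpP (by omega)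
      ⟨y - 1, ?_⟩
    push_cast at hy hr
    linarith

end

/-- Lemma: if a convex integer polygon `P` contains `(0,0)` and `(0, ℓ(P))`, where `ℓ(P)` is
its lattice diameter, then `P` lies in the slab `|x₁| ≤ ℓ(P) + 2`, and no integer point on the
lines `x₁ = ±(ℓ(P) + 1)` belongs to `P`. -/
theorem stmt14 (P : Set (ℝ × ℝ)) (hP : IsConvexIntegerPolygon P)
    (ℓ : ℕ) (hdiam : LatticeDiamIs P ℓ)
    (h0 : intPt (0, 0) ∈ P) (hℓ : intPt (0, (ℓ : ℤ)) ∈ P) :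
    (∀ x ∈ P, |x.1| ≤ (ℓ : ℝ) + 2) ∧
    (∀ p : ℤ × ℤ, (p.1 = (ℓ : ℤ) + 1 ∨ p.1 = -((ℓ : ℤ) + 1)) → intPt p ∉ P) := by
  refine ⟨fun x hx => hP.abs_fst_le_of_forall_intPt (fun p hp => ?_) hx,
    fun p hp => intPt_notMem_of_abs_fst_eq hP hdiam h0 hℓ ((abs_eq (by positivity)).mpr hp)⟩
  exact_mod_cast abs_fst_le_of_intPt_mem hP hdiam h0 hℓ hp
end

section
/- Let n ≥ 2 be an integer and let P be a convex integer polygon containing no point of nℤ² that contains a segment with ℓ(P) + 1 integer points lying on a line x₁ = c, where c is an integer with 0 ≤ c ≤ n. Then the segments [(0,n),(−n,n)] and [(n,0),(2n,0)] cannot both split P; likewise, the segments [(0,0),(−n,0)] and [(n,n),(2n,n)] cannot both split P. -/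
/-!
Suppose the first pair of segments both split `P`; the second case is its mirror image under
`y ↦ n - y`. Since `P` avoids `(0, n)` and `(n, 0)`, the row `y = n` of `P` lies strictly left of
`x = 0` and the row `y = 0` strictly right of `x = n`, and `P` has lattice points `r` above `y = n`
and `s` below `y = 0`. Crossing both rows, the chord `[s, r]` is flatter than an antidiagonal,
`r₂ - s₂ < s₁ - r₁`, and the vertical segment `[(c, a), (c, a + ℓ)]` lies strictly between the
rows. Now the chords from its endpoints to `r` and `s` either leave room for an antidiagonal
progression of `ℓ + 2` lattice points through `r` or through `s`, or they enclose a sheared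
`(ℓ + 1) × (ℓ + 1)` grid; with `r` that is `(ℓ + 1)² + 1` lattice points, two of them congruent
mod `ℓ + 1`, and the segment joining those two carries `ℓ + 2` lattice points. Either way some line
meets `P` in `ℓ + 2` lattice points, contradicting `ℓ(P) = ℓ`.
-/

open Set

/-- `P` contains no point of the lattice `nℤ² = (nℤ) × (nℤ)`. -/
def FreeOfLattice (n : ℕ) (P : Set (ℝ × ℝ)) : Prop :=
  ∀ u v : ℤ, intPt ((n : ℤ) * u, (n : ℤ) * v) ∉ P

/-- The segment `[p, q]`, lying on a line `L` through `p` and `q`, splits `P`: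
`P ∩ L ⊆ [p, q]` and both open half-planes bounded by `L` contain points of `P`. -/
def SegSplits (P : Set (ℝ × ℝ)) (p q : ℝ × ℝ) : Prop :=
  ∃ a b c : ℝ, ¬(a = 0 ∧ b = 0) ∧
    a * p.1 + b * p.2 = c ∧ a * q.1 + b * q.2 = c ∧
    (∀ x ∈ P, a * x.1 + b * x.2 = c → x ∈ segment ℝ p q) ∧
    (∃ x ∈ P, a * x.1 + b * x.2 < c) ∧ (∃ x ∈ P, c < a * x.1 + b * x.2)

/-- The vertical line `x₁ = c` splits `P`. -/
def VLineSplits (P : Set (ℝ × ℝ)) (c : ℝ) : Prop :=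
  (∃ x ∈ P, x.1 < c) ∧ (∃ x ∈ P, c < x.1)

/-- The horizontal line `x₂ = c` splits `P`. -/
def HLineSplits (P : Set (ℝ × ℝ)) (c : ℝ) : Prop :=
  (∃ x ∈ P, x.2 < c) ∧ (∃ x ∈ P, c < x.2)

namespace LatticePolygon

variable {P : Set (ℝ × ℝ)}

@[simp] lemma intPt_fst (p : ℤ × ℤ) : (intPt p).1 = p.1 := rfl

@[simp] lemma intPt_snd (p : ℤ × ℤ) : (intPt p).2 = p.2 := rfl

lemma intPt_injective : Function.Injective intPt := fun p q h =>
  Prod.ext (by simpa using congrArg Prod.fst h) (by simpa using congrArg Prod.snd h)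

lemma finite_inter_intPts (hP : IsCompact P) : (P ∩ intPts).Finite := by
  have hemb : Topology.IsClosedEmbedding intPt :=
    Int.isClosedEmbedding_coe_real.prodMap Int.isClosedEmbedding_coe_real
  refine ((hemb.isCompact_preimage hP).finite_of_discrete.image intPt).subset ?_
  rintro _ ⟨hz, p, rfl⟩
  exact ⟨p, hz, rfl⟩

lemma exists_intPt_mem_gt_snd {V : Finset (ℤ × ℤ)} (hPV : P = convexHull ℝ (intPt '' ↑V))
    {y : ℝ} (h : ∃ z ∈ P, y < z.2) : ∃ r, intPt r ∈ P ∧ y < r.2 := by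
  subst hPV
  obtain ⟨z, hz, hzy⟩ := h
  obtain ⟨_, ⟨r, hr, rfl⟩, hzr⟩ := ((LinearMap.snd ℝ ℝ ℝ).convexOn convex_univ
    ).exists_ge_of_mem_convexHull (subset_univ _) hz
  exact ⟨r, subset_convexHull ℝ _ ⟨r, hr, rfl⟩, hzy.trans_le hzr⟩

lemma exists_intPt_mem_lt_snd {V : Finset (ℤ × ℤ)} (hPV : P = convexHull ℝ (intPt '' ↑V))
    {y : ℝ} (h : ∃ z ∈ P, z.2 < y) : ∃ s, intPt s ∈ P ∧ (s.2 : ℝ) < y := by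
  subst hPV
  obtain ⟨z, hz, hzy⟩ := h
  obtain ⟨_, ⟨s, hs, rfl⟩, hsz⟩ := ((LinearMap.snd ℝ ℝ ℝ).concaveOn convex_univ
    ).exists_le_of_mem_convexHull (subset_univ _) hz
  exact ⟨s, subset_convexHull ℝ _ ⟨s, hs, rfl⟩, hsz.trans_lt hzy⟩

def HasLatticeProgression (P : Set (ℝ × ℝ)) (m : ℕ) : Prop :=
  ∃ x d : ℤ × ℤ, d ≠ 0 ∧ ∀ j ≤ m, intPt (x + j • d) ∈ P

lemma not_hasLatticeProgression {ℓ : ℕ} (hfin : (P ∩ intPts).Finite)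
    (hdiam : ∀ L, IsLine L → (P ∩ intPts ∩ L).ncard ≤ ℓ + 1) :
    ¬HasLatticeProgression P (ℓ + 1) := by
  rintro ⟨x, d, hd, hmem⟩
  set L : Set (ℝ × ℝ) :=
    {z | (d.2 : ℝ) * z.1 + -(d.1 : ℝ) * z.2 = d.2 * x.1 + -(d.1 : ℝ) * x.2}
  have hL : IsLine L :=
    ⟨_, _, _, fun h => hd (Prod.ext (by simpa using h.2) (by simpa using h.1)), rfl⟩
  set f : ℕ → ℝ × ℝ := fun j => intPt (x + j • d)
  have hsmul : Function.Injective fun j : ℕ => j • d := fun j k h =>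
    Nat.cast_injective (R := ℤ) (smul_left_injective ℤ hd (by simpa only [natCast_zsmul] using h))
  have hf : Function.Injective f := intPt_injective.comp ((add_right_injective x).comp hsmul)
  have hsub : ((Finset.range (ℓ + 2)).image f : Set (ℝ × ℝ)) ⊆ P ∩ intPts ∩ L := by
    intro z hz
    simp only [Finset.coe_image, Finset.coe_range, mem_image, mem_Iio] at hz
    obtain ⟨j, hj, rfl⟩ := hz
    refine ⟨⟨hmem j (by omega), _, rfl⟩, ?_⟩
    simp [L, f]
    ring
  have := (Set.ncard_le_ncard hsub (hfin.subset inter_subset_left)).trans (hdiam L hL)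
  rw [Set.ncard_coe_finset, Finset.card_image_of_injective _ hf, Finset.card_range] at this
  omega

lemma hasLatticeProgression_of_card_lt (hP : Convex ℝ P) {m : ℕ} (hm : 0 < m)
    {S : Finset (ℤ × ℤ)} (hS : ∀ p ∈ S, intPt p ∈ P) (hcard : m ^ 2 < S.card) :
    HasLatticeProgression P m := by
  have : NeZero m := ⟨hm.ne'⟩
  obtain ⟨p, hp, q, hq, hpq, hmod⟩ := Finset.exists_ne_map_eq_of_card_lt_of_maps_to
    (t := (Finset.univ : Finset (ZMod m × ZMod m))) (by simpa [ZMod.card, sq] using hcard)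
    (f := fun p : ℤ × ℤ => ((p.1 : ZMod m), (p.2 : ZMod m)))
    fun _ _ => Finset.mem_coe.2 (Finset.mem_univ _)
  simp only [Prod.mk.injEq, ZMod.intCast_eq_intCast_iff_dvd_sub] at hmod
  obtain ⟨⟨d₁, hd₁⟩, ⟨d₂, hd₂⟩⟩ := hmod
  refine ⟨p, (d₁, d₂), fun h => hpq ?_, fun j hj => ?_⟩
  · simp only [Prod.mk_eq_zero] at h
    simp only [h.1, h.2, mul_zero, sub_eq_zero] at hd₁ hd₂
    exact Prod.ext hd₁.symm hd₂.symm
  · have hmR : (0 : ℝ) < m := by exact_mod_cast hm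
    have := hP.lineMap_mem (hS p hp) (hS q hq) (t := j / m)
      ⟨by positivity, div_le_one_of_le₀ (by exact_mod_cast hj) hmR.le⟩
    convert this using 1
    have e₁ : (q.1 : ℝ) = p.1 + m * d₁ := by exact_mod_cast (by linarith : q.1 = p.1 + m * d₁)
    have e₂ : (q.2 : ℝ) = p.2 + m * d₂ := by exact_mod_cast (by linarith : q.2 = p.2 + m * d₂)
    ext <;> simp [AffineMap.lineMap_apply_module, e₁, e₂] <;> field_simp <;> ring

lemma exists_mem_row (hP : Convex ℝ P) {p q : ℝ × ℝ} (hp : p ∈ P) (hq : q ∈ P) {y : ℝ}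
    (hpy : p.2 ≤ y) (hyq : y ≤ q.2) (hpq : p.2 < q.2) :
    ∃ x, (x, y) ∈ P ∧ (x - p.1) * (q.2 - p.2) = (q.1 - p.1) * (y - p.2) := by
  have hD : 0 < q.2 - p.2 := sub_pos.2 hpq
  have := hP.lineMap_mem hp hq (t := (y - p.2) / (q.2 - p.2))
    ⟨div_nonneg (by linarith) hD.le, div_le_one_of_le₀ (by linarith) hD.le⟩
  refine ⟨_, ?_, (?_ : (p.1 + (y - p.2) / (q.2 - p.2) * (q.1 - p.1) - p.1) * _ = _)⟩
  · convert this using 1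
    ext <;> simp [AffineMap.lineMap_apply_module] <;> field_simp <;> ring
  · field_simp; ring

-- `hleft` and `hright`: `z` lies weakly right of the chord `[p, q]` and weakly left of `[p', q']`.
lemma mem_of_between_chords (hP : Convex ℝ P) {p q p' q' z : ℝ × ℝ} (hp : p ∈ P) (hq : q ∈ P)
    (hp' : p' ∈ P) (hq' : q' ∈ P) (hpz : p.2 ≤ z.2) (hzq : z.2 ≤ q.2) (hpq : p.2 < q.2)
    (hp'z : p'.2 ≤ z.2) (hzq' : z.2 ≤ q'.2) (hp'q' : p'.2 < q'.2)
    (hleft : (q.1 - p.1) * (z.2 - p.2) ≤ (z.1 - p.1) * (q.2 - p.2))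
    (hright : (z.1 - p'.1) * (q'.2 - p'.2) ≤ (q'.1 - p'.1) * (z.2 - p'.2)) : z ∈ P := by
  obtain ⟨x, hx, hxe⟩ := exists_mem_row hP hp hq hpz hzq hpq
  obtain ⟨x', hx', hxe'⟩ := exists_mem_row hP hp' hq' hp'z hzq' hp'q'
  have hxz : x ≤ z.1 := by nlinarith
  have hzx' : z.1 ≤ x' := by nlinarith
  have hseg : z ∈ segment ℝ (x, z.2) (x', z.2) := by
    rw [← Prod.image_mk_segment_left, segment_eq_uIcc]
    exact ⟨z.1, Set.mem_uIcc_of_le hxz hzx', rfl⟩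
  exact hP.segment_subset hx hx' hseg

lemma intPt_mem_of_between_chords (hP : Convex ℝ P) {p q p' q' z : ℤ × ℤ}
    (hp : intPt p ∈ P) (hq : intPt q ∈ P) (hp' : intPt p' ∈ P) (hq' : intPt q' ∈ P)
    (hpz : p.2 ≤ z.2) (hzq : z.2 ≤ q.2) (hpq : p.2 < q.2)
    (hp'z : p'.2 ≤ z.2) (hzq' : z.2 ≤ q'.2) (hp'q' : p'.2 < q'.2)
    (hleft : (q.1 - p.1) * (z.2 - p.2) ≤ (z.1 - p.1) * (q.2 - p.2))
    (hright : (z.1 - p'.1) * (q'.2 - p'.2) ≤ (q'.1 - p'.1) * (z.2 - p'.2)) : intPt z ∈ P := by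
  refine mem_of_between_chords hP hp hq hp' hq' ?_ ?_ ?_ ?_ ?_ ?_ ?_ ?_ <;>
    simp only [intPt_fst, intPt_snd] <;> assumption_mod_cast

lemma crossing_lt_of_row_lt (hP : Convex ℝ P) {p q : ℤ × ℤ} (hp : intPt p ∈ P)
    (hq : intPt q ∈ P) {y X : ℤ} (hpy : p.2 ≤ y) (hyq : y ≤ q.2) (hpq : p.2 < q.2)
    (hrow : ∀ x : ℝ, (x, (y : ℝ)) ∈ P → x < X) :
    (q.1 - p.1) * (y - p.2) < (X - p.1) * (q.2 - p.2) := by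
  obtain ⟨x, hx, hxe⟩ := exists_mem_row hP hp hq (y := y) (by simpa using hpy)
    (by simpa using hyq) (by simpa using hpq)
  have hD : (0 : ℝ) < q.2 - p.2 := by exact_mod_cast sub_pos.2 hpq
  have hxX := hrow x hx
  simp only [intPt_fst, intPt_snd] at hxe
  have : ((q.1 - p.1) * (y - p.2) : ℝ) < (X - p.1) * (q.2 - p.2) := by nlinarith
  exact_mod_cast this

lemma lt_crossing_of_row_gt (hP : Convex ℝ P) {p q : ℤ × ℤ} (hp : intPt p ∈ P)
    (hq : intPt q ∈ P) {y X : ℤ} (hpy : p.2 ≤ y) (hyq : y ≤ q.2) (hpq : p.2 < q.2)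
    (hrow : ∀ x : ℝ, (x, (y : ℝ)) ∈ P → X < x) :
    (X - p.1) * (q.2 - p.2) < (q.1 - p.1) * (y - p.2) := by
  obtain ⟨x, hx, hxe⟩ := exists_mem_row hP hp hq (y := y) (by simpa using hpy)
    (by simpa using hyq) (by simpa using hpq)
  have hD : (0 : ℝ) < q.2 - p.2 := by exact_mod_cast sub_pos.2 hpq
  have hxX := hrow x hx
  simp only [intPt_fst, intPt_snd] at hxe
  have : ((X - p.1) * (q.2 - p.2) : ℝ) < (q.1 - p.1) * (y - p.2) := by nlinarith
  exact_mod_cast this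

lemma hasLatticeProgression_of_shallow_chord (hP : Convex ℝ P) {ℓ : ℕ} {r s : ℤ × ℤ} {a c : ℤ}
    (hr : intPt r ∈ P) (hs : intPt s ∈ P) (hB : intPt (c, a) ∈ P) (hT : intPt (c, a + ℓ) ∈ P)
    (hslope : r.2 - s.2 < s.1 - r.1) (hsa : s.2 < a) (har : a + ℓ < r.2) :
    HasLatticeProgression P (ℓ + 1) := by
  by_cases hA : c - r.1 ≤ r.2 - a
  · refine ⟨r, (1, -1), by simp, fun j hj => ?_⟩
    have hj' : (j : ℤ) ≤ ℓ + 1 := by exact_mod_cast hj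
    have hz : r + j • ((1 : ℤ), (-1 : ℤ)) = (r.1 + j, r.2 - j) := by
      ext <;> simp [sub_eq_add_neg]
    rw [hz]
    refine intPt_mem_of_between_chords hP hB hr hs hr ?_ ?_ ?_ ?_ ?_ ?_ ?_ ?_ <;>
      (try dsimp only) <;>
      nlinarith [mul_nonneg (Int.natCast_nonneg j) (sub_nonneg.2 hA),
        mul_nonneg (Int.natCast_nonneg j) (sub_nonneg.2 hslope.le)]
  by_cases hB' : s.1 - c ≤ a + ℓ - s.2
  · refine ⟨s, (-1, 1), by simp, fun j hj => ?_⟩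
    have hj' : (j : ℤ) ≤ ℓ + 1 := by exact_mod_cast hj
    have hz : s + j • ((-1 : ℤ), (1 : ℤ)) = (s.1 - j, s.2 + j) := by
      ext <;> simp [sub_eq_add_neg]
    rw [hz]
    refine intPt_mem_of_between_chords hP hs hr hs hT ?_ ?_ ?_ ?_ ?_ ?_ ?_ ?_ <;>
      (try dsimp only) <;>
      nlinarith [mul_nonneg (Int.natCast_nonneg j) (sub_nonneg.2 hB'),
        mul_nonneg (Int.natCast_nonneg j) (sub_nonneg.2 hslope.le)]
  rw [not_le] at hA hB'
  set grid := (Finset.Icc (0 : ℤ) ℓ ×ˢ Finset.Icc (0 : ℤ) ℓ).image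
    fun ij => (c - ij.2 + ij.1, a + ij.2)
  have hgrid : ∀ z ∈ grid, intPt z ∈ P := by
    simp only [grid, Finset.forall_mem_image, Finset.mem_product, Finset.mem_Icc, and_imp,
      Prod.forall]
    intro i j hi₀ hiℓ hj₀ hjℓ
    refine intPt_mem_of_between_chords hP hB hr hs hT ?_ ?_ ?_ ?_ ?_ ?_ ?_ ?_ <;>
      (try dsimp only) <;>
      nlinarith [mul_nonneg hi₀ (sub_nonneg.2 har.le), mul_nonneg hj₀ (sub_nonneg.2 hA.le),
        mul_nonneg (sub_nonneg.2 hjℓ) (sub_nonneg.2 hB'.le),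
        mul_nonneg (sub_nonneg.2 hiℓ) (sub_nonneg.2 hsa.le)]
  have hinj : Function.Injective fun ij : ℤ × ℤ => (c - ij.2 + ij.1, a + ij.2) := by
    intro ij ij' h
    simp only [Prod.mk.injEq] at h
    ext <;> omega
  have hr_notMem : r ∉ grid := by
    intro h
    obtain ⟨⟨i, j⟩, hij, rfl⟩ := Finset.mem_image.1 h
    simp only [Finset.mem_product, Finset.mem_Icc] at hij har
    omega
  refine hasLatticeProgression_of_card_lt hP ℓ.succ_pos (S := insert r grid) ?_ ?_
  · simpa only [Finset.forall_mem_insert] using ⟨hr, hgrid⟩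
  · rw [Finset.card_insert_of_notMem hr_notMem, Finset.card_image_of_injective _ hinj,
      Finset.card_product, Int.card_Icc]
    simp [sq]

lemma false_of_rows (hP : Convex ℝ P) {ℓ n : ℕ} (hprog : ¬HasLatticeProgression P (ℓ + 1))
    (hTop : ∀ x : ℝ, (x, (n : ℝ)) ∈ P → x < 0) (hBot : ∀ x : ℝ, (x, 0) ∈ P → (n : ℝ) < x)
    {r s : ℤ × ℤ} (hr : intPt r ∈ P) (hs : intPt s ∈ P) (hr₂ : (n : ℤ) < r.2) (hs₂ : s.2 < 0)
    {a c : ℤ} (hc₀ : 0 ≤ c) (hcn : c ≤ n) (hB : intPt (c, a) ∈ P) (hT : intPt (c, a + ℓ) ∈ P) :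
    False := by
  have hTop' : ∀ x : ℝ, (x, ((n : ℤ) : ℝ)) ∈ P → x < ((0 : ℤ) : ℝ) := by simpa using hTop
  have hBot' : ∀ x : ℝ, (x, ((0 : ℤ) : ℝ)) ∈ P → ((n : ℤ) : ℝ) < x := by simpa using hBot
  have hn : (0 : ℤ) ≤ n := by omega
  have h₁ := crossing_lt_of_row_lt hP hs hr (by omega) hr₂.le (by omega) hTop'
  have h₂ := lt_crossing_of_row_gt hP hs hr hs₂.le (by omega) (by omega) hBot'
  have hslope : r.2 - s.2 < s.1 - r.1 := by nlinarith
  have hr₁ : r.1 < 0 := by nlinarith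
  have hs₁ : 0 < s.1 := by nlinarith
  have ha : 0 < a := by
    by_contra! ha
    have := lt_crossing_of_row_gt hP hB hr (by omega) (by omega) (by omega) hBot'
    nlinarith
  have hb : a + ℓ < n := by
    by_contra! hb
    have := crossing_lt_of_row_lt hP hs hT (by omega) (by omega) (by omega) hTop'
    nlinarith
  exact hprog (hasLatticeProgression_of_shallow_chord hP hr hs hB hT hslope (by omega) (by omega))

lemma false_of_rows_mirror (hP : Convex ℝ P) {ℓ n : ℕ} (hprog : ¬HasLatticeProgression P (ℓ + 1))
    (hBot : ∀ x : ℝ, (x, 0) ∈ P → x < 0) (hTop : ∀ x : ℝ, (x, (n : ℝ)) ∈ P → (n : ℝ) < x)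
    {r s : ℤ × ℤ} (hr : intPt r ∈ P) (hs : intPt s ∈ P) (hr₂ : (n : ℤ) < r.2) (hs₂ : s.2 < 0)
    {a c : ℤ} (hc₀ : 0 ≤ c) (hcn : c ≤ n) (hB : intPt (c, a) ∈ P) (hT : intPt (c, a + ℓ) ∈ P) :
    False := by
  set F : ℝ × ℝ → ℝ × ℝ := fun z => (z.1, n - z.2)
  have hF : ∀ p : ℤ × ℤ, F (intPt (p.1, n - p.2)) = intPt p := fun p => by simp [F, intPt]
  have hconv : Convex ℝ (F ⁻¹' P) := by
    intro x hx y hy μ ν hμ hν hμν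
    rw [Set.mem_preimage]
    convert (hP hx hy hμ hν hμν : μ • F x + ν • F y ∈ P) using 1
    ext
    · simp [F]
    · simp [F]
      linear_combination -(n : ℝ) * hμν
  have hprog' : ¬HasLatticeProgression (F ⁻¹' P) (ℓ + 1) := by
    rintro ⟨x, d, hd, hmem⟩
    refine hprog ⟨(x.1, n - x.2), (d.1, -d.2), fun h => hd ?_, fun j hj => ?_⟩
    · exact Prod.ext_iff.2 (by simpa using h)
    · have : intPt ((x.1, n - x.2) + j • (d.1, -d.2)) = F (intPt (x + j • d)) := by
        ext <;> simp [F, intPt]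
        ring
      exact this ▸ hmem j hj
  refine false_of_rows hconv hprog' (fun x hx => hBot x (by simpa [F] using hx))
    (fun x hx => hTop x (by simpa [F] using hx)) (r := (s.1, n - s.2)) (s := (r.1, n - r.2))
    (by rw [Set.mem_preimage, hF]; exact hs) (by rw [Set.mem_preimage, hF]; exact hr)
    (by simp; omega) (by simp; omega) (a := n - a - ℓ) hc₀ hcn ?_ ?_
  · rw [Set.mem_preimage, show ((c, n - a - ℓ) : ℤ × ℤ) = ((c, a + ℓ).1, n - (c, a + ℓ).2) by
      simp; ring, hF]
    exact hT
  · rw [Set.mem_preimage, show ((c, n - a - ℓ + ℓ) : ℤ × ℤ) = ((c, a).1, n - (c, a).2) by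
      simp, hF]
    exact hB

end LatticePolygon

namespace SegSplits

variable {P : Set (ℝ × ℝ)}

lemma horizontal {X₁ X₂ Y : ℝ} (h : SegSplits P (X₁, Y) (X₂, Y)) (hX : X₁ ≠ X₂) :
    (∀ x, (x, Y) ∈ P → x ∈ uIcc X₁ X₂) ∧ (∃ z ∈ P, z.2 < Y) ∧ (∃ z ∈ P, Y < z.2) := by
  obtain ⟨α, β, γ, hαβ, h₁, h₂, hrow, ⟨z, hz, hzγ⟩, ⟨w, hw, hwγ⟩⟩ := h
  have hα : α = 0 :=
    (mul_eq_zero.1 (by linarith : α * (X₁ - X₂) = 0)).resolve_right (sub_ne_zero.2 hX)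
  have hβ : β ≠ 0 := fun hβ => hαβ ⟨hα, hβ⟩
  subst hα
  refine ⟨fun x hx => ?_, ?_⟩
  · have := hrow _ hx (by simpa using h₁)
    rw [← Prod.image_mk_segment_left, segment_eq_uIcc] at this
    obtain ⟨x', hx', hx'x⟩ := this
    rwa [← (Prod.mk.inj hx'x).1]
  · simp only [zero_mul, zero_add] at h₁ hzγ hwγ
    subst h₁
    rcases hβ.lt_or_gt with hβ | hβ
    · exact ⟨⟨w, hw, by nlinarith⟩, ⟨z, hz, by nlinarith⟩⟩
    · exact ⟨⟨z, hz, by nlinarith⟩, ⟨w, hw, by nlinarith⟩⟩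

lemma lt_of_mem_row {n Y x : ℝ} (h : SegSplits P (0, Y) (-n, Y)) (hn : 0 < n)
    (h₀ : (0, Y) ∉ P) (hx : (x, Y) ∈ P) : x < 0 := by
  have := (h.horizontal (by linarith)).1 x hx
  rw [uIcc_of_ge (by linarith)] at this
  exact this.2.lt_of_ne (by rintro rfl; exact h₀ hx)

lemma gt_of_mem_row {n Y x : ℝ} (h : SegSplits P (n, Y) (2 * n, Y)) (hn : 0 < n)
    (hn₀ : (n, Y) ∉ P) (hx : (x, Y) ∈ P) : n < x := by
  have := (h.horizontal (by linarith)).1 x hx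
  rw [uIcc_of_le (by linarith)] at this
  exact this.1.lt_of_ne (by rintro rfl; exact hn₀ hx)

end SegSplits

open LatticePolygon in
/-- Lemma: under the hypotheses of the previous lemma, the segments `[(0,n),(-n,n)]` and
`[(n,0),(2n,0)]` cannot both split `P`, and likewise the segments `[(0,0),(-n,0)]` and
`[(n,n),(2n,n)]` cannot both split `P`. -/
theorem stmt16 (n : ℕ) (hn : 2 ≤ n) (P : Set (ℝ × ℝ)) (hP : IsConvexIntegerPolygon P)
    (hfree : FreeOfLattice n P)
    (ℓ : ℕ) (hdiam : LatticeDiamIs P ℓ)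
    (a c : ℤ) (hc0 : 0 ≤ c) (hcn : c ≤ (n : ℤ))
    (hseg : segment ℝ ((c : ℝ), (a : ℝ)) ((c : ℝ), ((a + (ℓ : ℤ) : ℤ) : ℝ)) ⊆ P) :
    ¬(SegSplits P (0, (n : ℝ)) (-(n : ℝ), (n : ℝ)) ∧
        SegSplits P ((n : ℝ), 0) ((2 * n : ℝ), 0)) ∧
    ¬(SegSplits P (0, 0) (-(n : ℝ), 0) ∧
        SegSplits P ((n : ℝ), (n : ℝ)) ((2 * n : ℝ), (n : ℝ))) := by
  obtain ⟨V, hPV, -⟩ := hP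
  have hconv : Convex ℝ P := hPV ▸ convex_convexHull ℝ _
  have hprog : ¬HasLatticeProgression P (ℓ + 1) := not_hasLatticeProgression
    (finite_inter_intPts (hPV ▸ (V.finite_toSet.image intPt).isCompact_convexHull (𝕜 := ℝ)))
    hdiam.2
  have hB : intPt (c, a) ∈ P := hseg (left_mem_segment ℝ _ _)
  have hT : intPt (c, a + ℓ) ∈ P := hseg (right_mem_segment ℝ _ _)
  have hnR : (0 : ℝ) < n := by exact_mod_cast (by omega : 0 < n)
  have h00 : ((0 : ℝ), (0 : ℝ)) ∉ P := by simpa [intPt] using hfree 0 0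
  have h01 : ((0 : ℝ), (n : ℝ)) ∉ P := by simpa [intPt] using hfree 0 1
  have h10 : ((n : ℝ), (0 : ℝ)) ∉ P := by simpa [intPt] using hfree 1 0
  have h11 : ((n : ℝ), (n : ℝ)) ∉ P := by simpa [intPt] using hfree 1 1
  refine ⟨fun ⟨h₁, h₂⟩ => ?_, fun ⟨h₁, h₂⟩ => ?_⟩
  · obtain ⟨r, hr, hr₂⟩ := exists_intPt_mem_gt_snd hPV (h₁.horizontal (by linarith)).2.2
    obtain ⟨s, hs, hs₂⟩ := exists_intPt_mem_lt_snd hPV (h₂.horizontal (by linarith)).2.1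
    exact false_of_rows hconv hprog (fun _ => h₁.lt_of_mem_row hnR h01)
      (fun _ => h₂.gt_of_mem_row hnR h10) hr hs (by exact_mod_cast hr₂) (by exact_mod_cast hs₂)
      hc0 hcn hB hT
  · obtain ⟨r, hr, hr₂⟩ := exists_intPt_mem_gt_snd hPV (h₂.horizontal (by linarith)).2.2
    obtain ⟨s, hs, hs₂⟩ := exists_intPt_mem_lt_snd hPV (h₁.horizontal (by linarith)).2.1
    exact false_of_rows_mirror hconv hprog (fun _ => h₁.lt_of_mem_row hnR h00)
      (fun _ => h₂.gt_of_mem_row hnR h11) hr hs (by exact_mod_cast hr₂) (by exact_mod_cast hs₂)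
      hc0 hcn hB hT
end

section
/- Suppose that an integer frame (o; f₁, f₂) splits an integer slope Q with vertices v₀, …, v_N, where v_i = o + v_{i1}f₁ + v_{i2}f₂, a_i = v_i − v_{i−1} = a_{i1}f₁ + a_{i2}f₂, and v₀ is the endpoint with positive second coordinate. Set k = min{i : v_{i2} < 0}, α = a_{k1}/(−a_{k2}), t = ⌈α⌉ − 1, S = {i : 1 ≤ i < k and a_{i2} = −1}, and s = |S|. Then s ≤ t, and the sum over i ∈ S of a_{i1} is at most (t − s)s + s(s+1)/2. Moreover, if all vertices of Q belong to a proper sublattice of ℤ² (a sublattice Γ ≠ ℤ²), then s = t is possible only if both equal 0 or both equal 1, and in the case s = t = 1 the unique index i ∈ S satisfies a_i = f₁ − f₂. -/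
open Set

/-- A sublattice of `ℤ²`: a subgroup generated by two linearly independent vectors. -/
def IsSublatticeZ2 (Λ : AddSubgroup (ℤ × ℤ)) : Prop :=
  ∃ f g : ℤ × ℤ, f.1 * g.2 - f.2 * g.1 ≠ 0 ∧ Λ = AddSubgroup.closure {f, g}

/-- `Λ` has invariant factor sequence `(δ, n)`: it equals `A·ℤ²` for an integer matrix `A`
with nonzero determinant, where `δ` is the gcd of the four entries of `A` and
`n = |det A| / δ`. -/
def HasInvFactors (Λ : AddSubgroup (ℤ × ℤ)) (δ n : ℕ) : Prop :=
  ∃ a b c d : ℤ, a * d - b * c ≠ 0 ∧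
    (∀ p : ℤ × ℤ, p ∈ Λ ↔ ∃ u v : ℤ, p = (a * u + b * v, c * u + d * v)) ∧
    δ = Nat.gcd (Nat.gcd a.natAbs b.natAbs) (Nat.gcd c.natAbs d.natAbs) ∧
    n = (a * d - b * c).natAbs / δ

/-- `(f₁, f₂)` is a basis of the lattice `ℤ²`. -/
def IsZBasis (f₁ f₂ : ℤ × ℤ) : Prop :=
  f₁.1 * f₂.2 - f₁.2 * f₂.1 = 1 ∨ f₁.1 * f₂.2 - f₁.2 * f₂.1 = -1

/-- `v 0, …, v N` are the vertices of an integer slope with respect to `(f₁, f₂)`,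
with edge vectors `v i - v (i-1)` having coordinates `a i` with respect to `(f₁, f₂)`:
the edge vectors point right and down and turn counterclockwise. -/
def IsIntSlope (f₁ f₂ : ℤ × ℤ) (N : ℕ) (v a : ℕ → ℤ × ℤ) : Prop :=
  (∀ i, 1 ≤ i → i ≤ N → v i - v (i - 1) = (a i).1 • f₁ + (a i).2 • f₂) ∧
  (∀ i, 1 ≤ i → i ≤ N → 0 < (a i).1 ∧ (a i).2 < 0) ∧
  (∀ i, 1 ≤ i → i + 1 ≤ N → 0 < (a i).1 * (a (i + 1)).2 - (a i).2 * (a (i + 1)).1)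

/-- `c i` are the coordinates of the vertices `v i` with respect to the integer frame
`(o; f₁, f₂)`. -/
def FrameCoords (o f₁ f₂ : ℤ × ℤ) (N : ℕ) (v c : ℕ → ℤ × ℤ) : Prop :=
  ∀ i ≤ N, v i = o + (c i).1 • f₁ + (c i).2 • f₂

/-- The frame splits the slope (expressed via the frame coordinates `c i` of the vertices):
the endpoint `v 0` has coordinates `(<0, >0)`, the endpoint `v N` has coordinates `(>0, <0)`,
and some point of the slope has both frame coordinates positive. -/
def FrameSplits (N : ℕ) (c : ℕ → ℤ × ℤ) : Prop :=
  (c 0).1 < 0 ∧ 0 < (c 0).2 ∧ 0 < (c N).1 ∧ (c N).2 < 0 ∧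
  ∃ i, 1 ≤ i ∧ i ≤ N ∧ ∃ lam : ℝ, 0 ≤ lam ∧ lam ≤ 1 ∧
    0 < (1 - lam) * ((c (i - 1)).1 : ℝ) + lam * ((c i).1 : ℝ) ∧
    0 < (1 - lam) * ((c (i - 1)).2 : ℝ) + lam * ((c i).2 : ℝ)

private lemma auxSumRange (n : ℕ) : ∀ (T : Finset ℤ) (t : ℤ), T.card = n →
    (∀ x ∈ T, x ≤ t) → ∑ x ∈ T, x ≤ ∑ j ∈ Finset.range n, (t - (j : ℤ)) := by
  induction n with
  | zero => intro T t hc _; rw [Finset.card_eq_zero] at hc; simp [hc]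
  | succ n ih =>
    intro T t hc hle
    have hne : T.Nonempty := Finset.card_pos.mp (by omega)
    have hm : T.max' hne ∈ T := T.max'_mem hne
    have h2 : (T.erase (T.max' hne)).card = n := by
      rw [Finset.card_erase_of_mem hm, hc]; omega
    have h3 : ∀ x ∈ T.erase (T.max' hne), x ≤ t - 1 := by
      intro x hx
      have h4 := T.le_max' x (Finset.mem_of_mem_erase hx)
      have h5 := Finset.ne_of_mem_erase hx
      have h6 := hle _ hm
      rcases lt_or_eq_of_le h4 with h | h
      · omega
      · exact absurd h h5
    have h4 := ih _ (t - 1) h2 h3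
    have h5 : ∑ x ∈ T, x = T.max' hne + ∑ x ∈ T.erase (T.max' hne), x :=
      (Finset.add_sum_erase _ _ hm).symm
    have h6 : ∑ j ∈ Finset.range n, (t - ((j : ℕ) + 1 : ℕ)) =
        ∑ j ∈ Finset.range n, (t - 1 - (j : ℤ)) :=
      Finset.sum_congr rfl (by intro x _; push_cast; ring)
    rw [h5, Finset.sum_range_succ' (fun j => t - (j : ℤ)), h6]
    have h7 := hle _ hm
    push_cast
    linarith

private lemma auxTwoMulSum (s : ℕ) (t : ℤ) :
    2 * ∑ j ∈ Finset.range s, (t - (j : ℤ)) = 2 * t * s - s * (s - 1) := by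
  induction s with
  | zero => simp
  | succ n ih =>
    rw [Finset.sum_range_succ, mul_add, ih]
    push_cast
    ring

private lemma auxTop (f₁ f₂ : ℤ × ℤ) (hbasis : IsZBasis f₁ f₂)
    (Γ : AddSubgroup (ℤ × ℤ)) (h1 : f₁ ∈ Γ) (h2 : f₂ ∈ Γ) : Γ = ⊤ := by
  rw [eq_top_iff]
  intro z _
  rcases hbasis with hd | hd
  · have hz : z = (z.1 * f₂.2 - z.2 * f₂.1) • f₁ + (f₁.1 * z.2 - f₁.2 * z.1) • f₂ := by
      rw [Prod.ext_iff]
      constructor <;> simp only [Prod.smul_fst, Prod.smul_snd, Prod.fst_add, Prod.snd_add,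
        smul_eq_mul]
      · linear_combination (-z.1) * hd
      · linear_combination (-z.2) * hd
    rw [hz]
    exact add_mem (AddSubgroup.zsmul_mem Γ h1 _) (AddSubgroup.zsmul_mem Γ h2 _)
  · have hz : z = (-(z.1 * f₂.2 - z.2 * f₂.1)) • f₁ + (-(f₁.1 * z.2 - f₁.2 * z.1)) • f₂ := by
      rw [Prod.ext_iff]
      constructor <;> simp only [Prod.smul_fst, Prod.smul_snd, Prod.fst_add, Prod.snd_add,
        smul_eq_mul]
      · linear_combination z.1 * hd
      · linear_combination z.2 * hd
    rw [hz]
    exact add_mem (AddSubgroup.zsmul_mem Γ h1 _) (AddSubgroup.zsmul_mem Γ h2 _)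


set_option linter.unusedVariables false in
/-- Lemma: with `k` the least index with `(c k).2 < 0`, `α = (a k).1 / (-(a k).2)`,
`t = ⌈α⌉ - 1`, `S = {i : 1 ≤ i < k, (a i).2 = -1}` and `s = |S|`, one has `s ≤ t` and
`∑_{i ∈ S} (a i).1 ≤ (t - s)s + s(s+1)/2`; moreover if the vertices of the slope belong to a
proper sublattice of `ℤ²`, then `s = t` forces `s = 0` or `s = 1`, and in the latter case the
unique edge of `S` has associated vector `f₁ - f₂`, i.e. coordinates `(1, -1)`. -/
theorem stmt17 (o f₁ f₂ : ℤ × ℤ) (hbasis : IsZBasis f₁ f₂)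
    (N : ℕ) (hN : 1 ≤ N) (v a c : ℕ → ℤ × ℤ)
    (hslope : IsIntSlope f₁ f₂ N v a)
    (hcoords : FrameCoords o f₁ f₂ N v c)
    (hsplit : FrameSplits N c)
    (k : ℕ) (hkN : k ≤ N) (hk : (c k).2 < 0 ∧ ∀ j < k, 0 ≤ (c j).2)
    (t : ℤ) (ht : t = ⌈((a k).1 : ℚ) / (-((a k).2 : ℚ))⌉ - 1)
    (S : Finset ℕ) (hS : S = (Finset.range k).filter (fun i => 1 ≤ i ∧ (a i).2 = -1))
    (s : ℕ) (hs : s = S.card) :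
    (s : ℤ) ≤ t ∧
    (∑ i ∈ S, (a i).1) ≤ (t - (s : ℤ)) * (s : ℤ) + (s : ℤ) * ((s : ℤ) + 1) / 2 ∧
    (∀ Γ : AddSubgroup (ℤ × ℤ), IsSublatticeZ2 Γ → Γ ≠ ⊤ → (∀ i ≤ N, v i ∈ Γ) →
      ((s : ℤ) = t → s = 0 ∨ s = 1) ∧
      ((s : ℤ) = t → s = 1 → ∀ i ∈ S, a i = (1, -1))) := by

  obtain ⟨hv, hpos, hdet⟩ := hslope
  have hk1 : 1 ≤ k := by
    by_contra h
    have hk0 : k = 0 := by omega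
    have h2 := hsplit.2.1
    rw [hk0] at hk
    linarith [hk.1]
  set q : ℕ → ℚ := fun i => ((a i).1 : ℚ) / (-((a i).2 : ℚ)) with hqdef
  have hqstep : ∀ i, 1 ≤ i → i + 1 ≤ N → q i < q (i + 1) := by
    intro i h1 h2
    have hi := hpos i h1 (by omega)
    have hi1 := hpos (i + 1) (by omega) h2
    have hd := hdet i h1 h2
    have hb1 : (0 : ℚ) < -((a i).2 : ℚ) := by
      have h := hi.2
      have : ((a i).2 : ℚ) < 0 := by exact_mod_cast h
      linarith
    have hb2 : (0 : ℚ) < -((a (i + 1)).2 : ℚ) := by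
      have h := hi1.2
      have : ((a (i + 1)).2 : ℚ) < 0 := by exact_mod_cast h
      linarith
    have hdq : (0 : ℚ) < ((a i).1 : ℚ) * ((a (i + 1)).2 : ℚ)
        - ((a i).2 : ℚ) * ((a (i + 1)).1 : ℚ) := by exact_mod_cast hd
    simp only [hqdef]
    rw [div_lt_div_iff₀ hb1 hb2]
    nlinarith [hdq]
  have hqmono : ∀ i, 1 ≤ i → ∀ j, i < j → j ≤ N → q i < q j := by
    intro i h1 j
    induction j with
    | zero => omega
    | succ n ihj =>
      intro hij hjN
      rcases Nat.lt_or_ge i n with h | h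
      · exact lt_trans (ihj h (by omega)) (hqstep n (by omega) hjN)
      · have hin : i = n := by omega
        subst hin
        exact hqstep i h1 hjN
  have hmemS : ∀ i ∈ S, 1 ≤ i ∧ i < k ∧ (a i).2 = -1 := by
    intro i hi
    rw [hS, Finset.mem_filter, Finset.mem_range] at hi
    exact ⟨hi.2.1, hi.1, hi.2.2⟩
  have hqS : ∀ i ∈ S, q i = ((a i).1 : ℚ) := by
    intro i hi
    obtain ⟨_, _, h2⟩ := hmemS i hi
    simp only [hqdef, h2]
    norm_num
  have hqk_lt : ∀ i ∈ S, ((a i).1 : ℚ) < q k := by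
    intro i hi
    obtain ⟨h1, h2, _⟩ := hmemS i hi
    rw [← hqS i hi]
    exact hqmono i h1 k h2 hkN
  have ht' : t = ⌈q k⌉ - 1 := ht
  have hle_t : ∀ i ∈ S, (a i).1 ≤ t := by
    intro i hi
    have h := Int.lt_ceil.mpr (hqk_lt i hi)
    omega
  have h1le : ∀ i ∈ S, 1 ≤ (a i).1 := by
    intro i hi
    obtain ⟨h1, h2, _⟩ := hmemS i hi
    exact (hpos i h1 (by omega)).1
  have hqkpos : 0 < q k := by
    have hkp := hpos k hk1 hkN
    apply div_pos
    · exact_mod_cast hkp.1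
    · have h := hkp.2
      have : ((a k).2 : ℚ) < 0 := by exact_mod_cast h
      linarith
  have ht0 : 0 ≤ t := by
    have h := Int.ceil_pos.mpr hqkpos
    omega
  have hinj : ∀ i ∈ S, ∀ j ∈ S, (a i).1 = (a j).1 → i = j := by
    intro i hi j hj heq
    by_contra hne
    obtain ⟨hi1, hik, _⟩ := hmemS i hi
    obtain ⟨hj1, hjk, _⟩ := hmemS j hj
    rcases Nat.lt_or_ge i j with h | h
    · have hlt := hqmono i hi1 j h (by omega)
      rw [hqS i hi, hqS j hj, heq] at hlt
      exact lt_irrefl _ hlt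
    · have hj_lt : j < i := by omega
      have hlt := hqmono j hj1 i hj_lt (by omega)
      rw [hqS i hi, hqS j hj, heq] at hlt
      exact lt_irrefl _ hlt
  set T : Finset ℤ := S.image (fun i => (a i).1) with hT
  have hTcard : T.card = s := by
    rw [hT, Finset.card_image_of_injOn (fun i hi j hj => hinj i hi j hj), hs]
  have hTsub : T ⊆ Finset.Icc 1 t := by
    intro x hx
    rw [hT, Finset.mem_image] at hx
    obtain ⟨i, hi, rfl⟩ := hx
    exact Finset.mem_Icc.mpr ⟨h1le i hi, hle_t i hi⟩
  have hst : (s : ℤ) ≤ t := by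
    have h := Finset.card_le_card hTsub
    rw [hTcard, Int.card_Icc] at h
    omega
  have hsum_eq : ∑ i ∈ S, (a i).1 = ∑ x ∈ T, x := by
    rw [hT, Finset.sum_image (fun i hi j hj => hinj i hi j hj)]
  have hsum_le : ∑ x ∈ T, x ≤ ∑ j ∈ Finset.range s, (t - (j : ℤ)) := by
    apply auxSumRange s T t hTcard
    intro x hx
    exact (Finset.mem_Icc.mp (hTsub hx)).2
  have heven : (2 : ℤ) ∣ (s : ℤ) * ((s : ℤ) + 1) := (Int.even_mul_succ_self (s : ℤ)).two_dvd
  have hrange_eq : ∑ j ∈ Finset.range s, (t - (j : ℤ))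
      = (t - (s : ℤ)) * (s : ℤ) + (s : ℤ) * ((s : ℤ) + 1) / 2 := by
    apply mul_left_cancel₀ (by norm_num : (2 : ℤ) ≠ 0)
    rw [auxTwoMulSum s t, mul_add, Int.mul_ediv_cancel' heven]
    ring
  have hsum : ∑ i ∈ S, (a i).1 ≤ (t - (s : ℤ)) * (s : ℤ) + (s : ℤ) * ((s : ℤ) + 1) / 2 := by
    rw [hsum_eq, ← hrange_eq]
    exact hsum_le
  refine ⟨hst, hsum, ?_⟩
  intro Γ _ hΓtop hmemΓ
  have hedge : ∀ i ∈ S, ((a i).1 • f₁ + (a i).2 • f₂) ∈ Γ := by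
    intro i hi
    obtain ⟨h1, h2, _⟩ := hmemS i hi
    rw [← hv i h1 (by omega)]
    exact sub_mem (hmemΓ i (by omega)) (hmemΓ (i - 1) (by omega))
  constructor
  · intro hst_eq
    by_contra hcon
    push_neg at hcon
    have hs2 : 2 ≤ s := by omega
    have hTeq : T = Finset.Icc 1 t := by
      apply Finset.eq_of_subset_of_card_le hTsub
      rw [hTcard, Int.card_Icc]
      omega
    have h1T : (1 : ℤ) ∈ T := by
      rw [hTeq]; exact Finset.mem_Icc.mpr ⟨le_refl _, by omega⟩
    have h2T : (2 : ℤ) ∈ T := by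
      rw [hTeq]; exact Finset.mem_Icc.mpr ⟨by norm_num, by omega⟩
    rw [hT, Finset.mem_image] at h1T h2T
    obtain ⟨i, hi, hi1⟩ := h1T
    obtain ⟨j, hj, hj1⟩ := h2T
    have hi1' : (a i).1 = 1 := hi1
    have hj1' : (a j).1 = 2 := hj1
    have hm1 := hedge i hi
    have hm2 := hedge j hj
    rw [hi1', (hmemS i hi).2.2] at hm1
    rw [hj1', (hmemS j hj).2.2] at hm2
    have hf1 : f₁ ∈ Γ := by
      have h := sub_mem hm2 hm1
      have he : ((2 : ℤ) • f₁ + (-1 : ℤ) • f₂) - ((1 : ℤ) • f₁ + (-1 : ℤ) • f₂) = f₁ := by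
        module
      rwa [he] at h
    have hf2 : f₂ ∈ Γ := by
      have h := sub_mem hf1 hm1
      have he : f₁ - ((1 : ℤ) • f₁ + (-1 : ℤ) • f₂) = f₂ := by module
      rwa [he] at h
    exact hΓtop (auxTop f₁ f₂ hbasis Γ hf1 hf2)
  · intro hst_eq hs1 i hi
    have h1 := h1le i hi
    have h2 := hle_t i hi
    have h3 := (hmemS i hi).2.2
    have h4 : (a i).1 = 1 := by omega
    exact Prod.ext h4 h3
end

section
/- Suppose that an integer frame (o; f₁, f₂) splits an integer slope Q with vertices v₀, …, v_N, where v_i = o + v_{i1}f₁ + v_{i2}f₂, a_i = v_i − v_{i−1} = a_{i1}f₁ + a_{i2}f₂, and v₀ is the endpoint with positive second coordinate. With the notation k = min{i : v_{i2} < 0}, α = a_{k1}/(−a_{k2}), t = ⌈α⌉ − 1, S = {i : 1 ≤ i < k and a_{i2} = −1}, s = |S|, E₁ = {ε₁, …, ε_k} (where ε_i = [v_{i−1}, v_i]), and with the additive edge functions π₁, π₂, π̂ defined below, the following inequality holds: π̂(E₁) ≥ (v_{k−1,1}⁺ + v_{k−1,2} − 1) + δ + (t − s) + ⌊(−v_{k2}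 − 1)·α⌋, where δ = 1 if v_{k−1,2} > 0 and α is an integer, and δ = 0 otherwise. -/
open Set

/-- `π₁` of the `i`-th edge of a slope with frame coordinates `c`: the increment of the
positive part of the first frame coordinate (`x⁺ = max x 0`). -/
def pi1 (c : ℕ → ℤ × ℤ) (i : ℕ) : ℤ := max (c i).1 0 - max (c (i - 1)).1 0

/-- `π₂` of the `i`-th edge: the decrement of the positive part of the second coordinate. -/
def pi2 (c : ℕ → ℤ × ℤ) (i : ℕ) : ℤ := max (c (i - 1)).2 0 - max (c i).2 0

/-- `π̂ = π₁ + π₂ - 2` of the `i`-th edge. -/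
def piHat (c : ℕ → ℤ × ℤ) (i : ℕ) : ℤ := pi1 c i + pi2 c i - 2

section helpers

/-- telescoping sum -/
lemma tele_sum (g : ℕ → ℤ) (k : ℕ) :
    ∑ i ∈ Finset.Icc 1 k, (g i - g (i - 1)) = g k - g 0 := by
  induction k with
  | zero => simp
  | succ n ih =>
      rw [Finset.sum_Icc_succ_top (by omega : 1 ≤ n + 1), ih]
      simp


end helpers

set_option maxHeartbeats 2000000 in
/-- Lemma: lower bound on `π̂(E₁)`, where `E₁ = {ε₁, …, ε_k}` consists of the first `k` edges:
`π̂(E₁) ≥ (v_{k-1,1}⁺ + v_{k-1,2} - 1) + δ + (t - s) + ⌊(-v_{k2} - 1)·α⌋`, where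
`α = (a k).1 / (-(a k).2)`, `t = ⌈α⌉ - 1`, `s = |{i : 1 ≤ i < k, (a i).2 = -1}|`, and `δ = 1`
if `v_{k-1,2} > 0` and `α ∈ ℤ`, `δ = 0` otherwise. -/
theorem stmt18 (o f₁ f₂ : ℤ × ℤ) (hbasis : IsZBasis f₁ f₂)
    (N : ℕ) (hN : 1 ≤ N) (v a c : ℕ → ℤ × ℤ)
    (hslope : IsIntSlope f₁ f₂ N v a)
    (hcoords : FrameCoords o f₁ f₂ N v c)
    (hsplit : FrameSplits N c)
    (k : ℕ) (hkN : k ≤ N) (hk : (c k).2 < 0 ∧ ∀ j < k, 0 ≤ (c j).2)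
    (t : ℤ) (ht : t = ⌈((a k).1 : ℚ) / (-((a k).2 : ℚ))⌉ - 1)
    (s : ℤ) (hs : s = ((Finset.range k).filter (fun i => 1 ≤ i ∧ (a i).2 = -1)).card)
    (δ : ℤ) (hδ : δ = if 0 < (c (k - 1)).2 ∧ (a k).2 ∣ (a k).1 then 1 else 0) :
    (max (c (k - 1)).1 0 + (c (k - 1)).2 - 1) + δ + (t - s) +
        ⌊((-(c k).2 - 1 : ℤ) : ℚ) * (((a k).1 : ℚ) / (-((a k).2 : ℚ)))⌋ ≤
      ∑ i ∈ Finset.Icc 1 k, piHat c i := by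
  obtain ⟨hvc, hsign, hconv⟩ := hslope
  obtain ⟨hc01, hc02, hcN1, hcN2, i, hi1, hiN, lam, hl0, hl1, hp1, hp2⟩ := hsplit
  -- k ≥ 1
  have hk1 : 1 ≤ k := by
    by_contra h
    have hk0 : k = 0 := by omega
    have h2 := hk.1
    rw [hk0] at h2
    omega
  -- step A : a in terms of c
  have hac : ∀ i, 1 ≤ i → i ≤ N →
      (a i).1 = (c i).1 - (c (i-1)).1 ∧ (a i).2 = (c i).2 - (c (i-1)).2 := by
    intro i h1 h2
    have e := hvc i h1 h2
    rw [hcoords i h2, hcoords (i-1) (by omega)] at e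
    have e1 := congrArg Prod.fst e
    have e2 := congrArg Prod.snd e
    simp only [Prod.fst_add, Prod.snd_add, Prod.fst_sub, Prod.snd_sub, Prod.smul_fst,
      Prod.smul_snd, smul_eq_mul] at e1 e2
    rcases hbasis with hd | hd
    · constructor
      · linear_combination f₂.1 * e2 - f₂.2 * e1 - ((a i).1 - (c i).1 + (c (i-1)).1) * hd
      · linear_combination f₁.2 * e1 - f₁.1 * e2 - ((a i).2 - (c i).2 + (c (i-1)).2) * hd
    · constructor
      · linear_combination f₂.2 * e1 - f₂.1 * e2 + ((a i).1 - (c i).1 + (c (i-1)).1) * hd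
      · linear_combination f₁.1 * e2 - f₁.2 * e1 + ((a i).2 - (c i).2 + (c (i-1)).2) * hd
  -- monotone first coordinate
  have mono1 : ∀ j d : ℕ, j + d ≤ N → (c j).1 ≤ (c (j + d)).1 := by
    intro j d
    induction d with
    | zero => intro _; simp
    | succ n ih =>
        intro h
        have h1 := (hac (j+n+1) (by omega) (by omega)).1
        have h2 := (hsign (j+n+1) (by omega) (by omega)).1
        simp only [Nat.add_sub_cancel] at h1
        have h3 := ih (by omega)
        have hq : c (j + (n+1)) = c (j+n+1) := rfl
        rw [hq]
        omega
  -- second coordinate negative after k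
  have neg2 : ∀ j, k ≤ j → j ≤ N → (c j).2 < 0 := by
    have key : ∀ d : ℕ, k + d ≤ N → (c (k + d)).2 < 0 := by
      intro d
      induction d with
      | zero => intro _; simpa using hk.1
      | succ n ih =>
          intro h
          have h1 := (hac (k+n+1) (by omega) (by omega)).2
          have h2 := (hsign (k+n+1) (by omega) (by omega)).2
          simp only [Nat.add_sub_cancel] at h1
          have h3 := ih (by omega)
          have hq : c (k + (n+1)) = c (k+n+1) := rfl
          rw [hq]
          omega
    intro j hj1 hj2
    obtain ⟨d, rfl⟩ : ∃ d, j = k + d := ⟨j - k, by omega⟩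
    exact key d hj2
  -- split edge: i ≤ k and (c i).1 ≥ 1
  have hstep2 : ((c i).2 : ℝ) ≤ ((c (i-1)).2 : ℝ) := by
    have := (hac i hi1 hiN).2
    have := (hsign i hi1 hiN).2
    have : (c i).2 ≤ (c (i-1)).2 := by omega
    exact_mod_cast this
  have hstep1 : ((c (i-1)).1 : ℝ) ≤ ((c i).1 : ℝ) := by
    have := (hac i hi1 hiN).1
    have := (hsign i hi1 hiN).1
    have : (c (i-1)).1 ≤ (c i).1 := by omega
    exact_mod_cast this
  have hcim2 : 0 < (c (i-1)).2 := by
    have : (0:ℝ) < ((c (i-1)).2 : ℝ) := by nlinarith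
    exact_mod_cast this
  have hik : i ≤ k := by
    by_contra hcon
    have := neg2 (i-1) (by omega) (by omega)
    omega
  have hci1 : 1 ≤ (c i).1 := by
    have : (0:ℝ) < ((c i).1 : ℝ) := by nlinarith
    have : 0 < (c i).1 := by exact_mod_cast this
    omega
  have hck1 : 1 ≤ (c k).1 := by
    have := mono1 i (k - i) (by omega)
    have hq : i + (k - i) = k := by omega
    rw [hq] at this
    omega
  -- abbreviations
  set x := (c (k-1)).1 with hxdef
  set y := (c (k-1)).2 with hydef
  set p := (a k).1 with hpdef
  set m := -(a k).2 with hmdef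
  have hp : 1 ≤ p := (hsign k hk1 hkN).1
  have hm : 1 ≤ m := by have := (hsign k hk1 hkN).2; omega
  have heq1 : (c k).1 = x + p := by have := (hac k hk1 hkN).1; omega
  have heq2 : (c k).2 = y - m := by have := (hac k hk1 hkN).2; omega
  have hy : 0 ≤ y := hk.2 (k-1) (by omega)
  have hym : y ≤ m - 1 := by have := hk.1; omega
  clear_value x y p m
  -- split inequality when x < 0
  have hsx : x < 0 → (-x) * m + 1 ≤ y * p := by
    intro hx
    have hik2 : i = k := by
      by_contra hcon
      have h2 := mono1 i (k - 1 - i) (by omega)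
      have hq : i + (k - 1 - i) = k - 1 := by omega
      rw [hq] at h2
      omega
    rw [hik2] at hp1 hp2
    rw [heq1] at hp1
    rw [heq2] at hp2
    rw [← hxdef] at hp1
    rw [← hydef] at hp2
    have hxr : ((-x) * m : ℤ) < ((y * p : ℤ) : ℝ) → (-x) * m + 1 ≤ y * p := by
      intro h
      have : ((-x) * m : ℤ) < (y * p : ℤ) := by exact_mod_cast h
      omega
    apply hxr
    push_cast at hp1 hp2 ⊢
    have hpr : (0:ℝ) < (p:ℝ) := by exact_mod_cast hp
    have hmr : (0:ℝ) < (m:ℝ) := by positivity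
    have h1 : (0:ℝ) < (x:ℝ) + lam * p := by nlinarith
    have h2 : lam * m < (y:ℝ) := by nlinarith
    nlinarith
  -- telescoping sums
  have hsum1 : ∑ j ∈ Finset.Icc 1 k, pi1 c j = max (c k).1 0 - max (c 0).1 0 := by
    simp only [pi1]
    exact tele_sum (fun j => max (c j).1 0) k
  have hsum2 : ∑ j ∈ Finset.Icc 1 k, pi2 c j = max (c 0).2 0 - max (c k).2 0 := by
    have := tele_sum (fun j => -max (c j).2 0) k
    simp only [pi2]
    rw [show (∑ j ∈ Finset.Icc 1 k, (max (c (j-1)).2 0 - max (c j).2 0))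
        = ∑ j ∈ Finset.Icc 1 k, ((fun j => -max (c j).2 0) j - (fun j => -max (c j).2 0) (j-1))
        from by apply Finset.sum_congr rfl; intros; ring, this]
    ring
  have hsumhat : ∑ j ∈ Finset.Icc 1 k, piHat c j
      = (max (c k).1 0 - max (c 0).1 0) + (max (c 0).2 0 - max (c k).2 0) - 2 * k := by
    simp only [piHat]
    rw [Finset.sum_sub_distrib, Finset.sum_add_distrib, hsum1, hsum2]
    rw [Finset.sum_const, Nat.card_Icc]
    simp
    ring
  -- lower bound on (c 0).2
  have hbound : y + 2 * ((k:ℤ) - 1) - s ≤ (c 0).2 := by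
    set T := (Finset.range k).filter (fun i => 1 ≤ i ∧ (a i).2 = -1) with hT
    have hTsub : T ⊆ Finset.Icc 1 (k-1) := by
      intro j hj
      simp only [hT, Finset.mem_filter, Finset.mem_range] at hj
      simp only [Finset.mem_Icc]
      omega
    have htel := tele_sum (fun j => -(c j).2) (k-1)
    have hterm : ∀ j ∈ Finset.Icc 1 (k-1),
        (2 - (if j ∈ T then 1 else 0) : ℤ) ≤ (fun j => -(c j).2) j - (fun j => -(c j).2) (j-1) := by
      intro j hj
      simp only [Finset.mem_Icc] at hj
      have ha2 := (hac j (by omega) (by omega)).2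
      have hs2 := (hsign j (by omega) (by omega)).2
      by_cases hjT : j ∈ T
      · simp only [hjT, if_true]
        omega
      · simp only [hjT, if_false]
        simp only [hT, Finset.mem_filter, Finset.mem_range] at hjT
        have : (a j).2 ≠ -1 := by
          intro hcon
          exact hjT ⟨by omega, hj.1, hcon⟩
        omega
    have hsb := Finset.sum_le_sum hterm
    rw [htel] at hsb
    have hcc : ∑ j ∈ Finset.Icc 1 (k-1), (2 - (if j ∈ T then 1 else 0) : ℤ)
        = 2 * ((k:ℤ) - 1) - T.card := by
      rw [Finset.sum_sub_distrib, Finset.sum_const, Nat.card_Icc]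
      rw [Finset.sum_ite_mem, Finset.inter_eq_right.mpr hTsub, Finset.sum_const]
      simp
      push_cast
      omega
    rw [hcc] at hsb
    rw [hs]
    omega
  -- ceiling and floor facts
  set C := ⌈(p : ℚ) / (m : ℚ)⌉ with hCdef
  clear_value C
  have hmq : (0:ℚ) < (m:ℚ) := by exact_mod_cast hm.trans_lt' (by norm_num)
  have hC1 : p ≤ C * m := by
    have h := Int.le_ceil ((p : ℚ) / (m : ℚ))
    rw [← hCdef, div_le_iff₀ hmq] at h
    exact_mod_cast h
  have hC2 : (C - 1) * m < p := by
    have h := Int.ceil_lt_add_one ((p : ℚ) / (m : ℚ))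
    rw [← hCdef] at h
    have h2 : ((C - 1 : ℤ) : ℚ) < (p:ℚ) / m := by push_cast; linarith
    rw [lt_div_iff₀ hmq] at h2
    exact_mod_cast h2
  set F := ⌊((m - y - 1 : ℤ) : ℚ) * ((p : ℚ) / (m : ℚ))⌋ with hFdef
  clear_value F
  have hF : F * m ≤ (m - y - 1) * p := by
    have h := Int.floor_le (((m - y - 1 : ℤ) : ℚ) * ((p : ℚ) / (m : ℚ)))
    rw [← hFdef] at h
    have h2 : (F:ℚ) ≤ ((m - y - 1 : ℤ):ℚ) * p / m := by rw [mul_div_assoc]; exact h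
    rw [le_div_iff₀ hmq] at h2
    exact_mod_cast h2
  -- rewrite the goal
  have hm2 : -((a k).2 : ℚ) = (m : ℚ) := by rw [hmdef]; push_cast; ring
  have hgoal1 : ⌊((-(c k).2 - 1 : ℤ) : ℚ) * ((p : ℚ) / (-((a k).2 : ℚ)))⌋ = F := by
    rw [hFdef]
    congr 1
    rw [hm2, heq2]
    push_cast
    ring
  have hgoal2 : t = C - 1 := by
    rw [ht, hm2, ← hCdef]
  rw [hgoal1, hgoal2, hsumhat]
  rw [show max (c k).1 0 = x + p from by rw [heq1] at hck1 ⊢; omega]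
  rw [show max (c 0).1 0 = 0 from by omega]
  rw [show max (c k).2 0 = 0 from by have := hk.1; omega]
  rw [show max (c 0).2 0 = (c 0).2 from by omega]
  -- final arithmetic
  clear hvc hsign hconv hcoords hbasis hc01 hcN1 hcN2 hstep1 hstep2 hp1 hp2 hl0 hl1
  clear hcim2 hci1 hck1 hik hac mono1 neg2 hsum1 hsum2 hsumhat hgoal1 hgoal2 hm2 hmq
  clear ht hs hFdef hCdef heq1 heq2 hxdef hydef hpdef hi1 hiN hN hkN hk1 hk hc02
  rcases le_or_gt 0 x with hx | hx
  · rw [show max x 0 = x from by omega]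
    by_cases hcond : 0 < y ∧ (a k).2 ∣ p
    · rw [hδ, if_pos hcond]
      obtain ⟨hy1, q, hq⟩ := hcond
      have hq' : p = -q * m := by rw [hq, hmdef]; ring
      have hqC : -q = C := by
        have h1 : C - 1 < -q := by
          have h := hC2
          rw [hq'] at h
          exact lt_of_mul_lt_mul_right h (by omega)
        have h2 : -q ≤ C := by
          have h := hC1
          rw [hq'] at h
          exact le_of_mul_le_mul_right h (by omega)
        omega
      have hCp : p = C * m := by rw [hq', hqC]
      have hy1' : 1 ≤ y := hy1
      have hC0 : 1 ≤ C := by nlinarith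
      have hFb : F ≤ (m - 2) * C := by nlinarith
      nlinarith
    · rw [hδ, if_neg hcond]
      clear hcond
      have key : C + F ≤ p := by nlinarith [mul_nonneg hy (by omega : (0:ℤ) ≤ p)]
      omega
  · rw [show max x 0 = 0 from by omega]
    have hsx' := hsx hx
    by_cases hcond : 0 < y ∧ (a k).2 ∣ p
    · rw [hδ, if_pos hcond]
      obtain ⟨hy1, q, hq⟩ := hcond
      have hq' : p = -q * m := by rw [hq, hmdef]; ring
      have hqC : -q = C := by
        have h1 : C - 1 < -q := by
          have h := hC2
          rw [hq'] at h
          exact lt_of_mul_lt_mul_right h (by omega)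
        have h2 : -q ≤ C := by
          have h := hC1
          rw [hq'] at h
          exact le_of_mul_le_mul_right h (by omega)
        omega
      have hCp : p = C * m := by rw [hq', hqC]
      have hmul : (C + F - x - p) * m ≤ -1 := by nlinarith [hF, hsx', hCp]
      have key : C + F - x - p ≤ -1 := by
        rcases le_or_gt (C + F - x - p) (-1) with h | h
        · exact h
        · nlinarith
      omega
    · rw [hδ, if_neg hcond]
      clear hcond
      have hmul : (C + F - x - p) * m ≤ m - 2 := by nlinarith [hF, hsx', hC2]
      have key : C + F - x - p ≤ 0 := by
        rcases le_or_gt (C + F - x - p) 0 with h | h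
        · exact h
        · nlinarith
      omega
end

section
/- Suppose that an integer frame (o; f₁, f₂) splits an integer slope Q all of whose vertices belong to a proper sublattice Γ of ℤ² (a sublattice with Γ ≠ ℤ²). Then π̂(E) ≥ 1, where E is the set of all edges of Q; equivalently, if Q has N edges and endpoints v = o + v₁f₁ + v₂f₂ with v₁ < 0, v₂ > 0 and w = o + w₁f₁ + w₂f₂ with w₁ > 0, w₂ < 0, then w₁ + v₂ − 2N ≥ 1. -/
open Set

/-!
In frame coordinates the edges are vectors `(x, -y)` with `x, y ≥ 1` and decreasing slopes, and
any two of them span a determinant `≥ 2`: determinant `1` would make two vectors of `Γ` a basis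
of `ℤ²`. If edge `k` passes through the open positive quadrant, `w₁ + v₂ - 2N - 1` is the sum of
`y - 2` over the edges before `k`, of `x - 2` over the edges after `k`, and of `X + Y - 3`, where
`X ≥ 1` is the first coordinate of the end of edge `k` and `Y ≥ 1` the second coordinate of its
start. Losses come only from narrow edges (`y = 1` before `k`, `x = 1` after `k`) and from
`X = Y = 1`, which forces `x = 1` or `y = 1` on edge `k` and a gain on its neighbour.
A narrow edge `(x₀, -1)` forces every later edge to satisfy `x ≥ x₀ y + 2`. Hence the narrow
edges before `k` have strictly increasing `x`, so there are at most `x₀` of them if `(x₀, -1)` is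
the last one, while the edges from `k` on recover at least `x₀`. Narrow edges after `k` are the
mirror image.
-/

open Finset

lemma add_mul_sub_le_of_le_sub {f : ℕ → ℤ} {c : ℤ} {a b : ℕ} (hab : a ≤ b)
    (h : ∀ j, a ≤ j → j < b → c ≤ f (j + 1) - f j) : f a + c * ((b : ℤ) - a) ≤ f b := by
  induction b, hab using Nat.le_induction with
  | base => simp
  | succ n hn ih =>
    have := h n hn (by omega)
    have := ih fun j hj hjn => h j hj (by omega)
    push_cast
    linarith

lemma two_mul_card_le_sum_add_card_filter {ι : Type*} (s : Finset ι) (g : ι → ℤ)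
    (hg : ∀ i ∈ s, 1 ≤ g i) : 2 * (#s : ℤ) ≤ ∑ i ∈ s, g i + #{i ∈ s | g i = 1} := by
  rw [natCast_card_filter, card_eq_sum_ones, Nat.cast_sum, mul_sum, ← sum_add_distrib]
  refine sum_le_sum fun i hi => ?_
  have := hg i hi
  split_ifs <;> omega

lemma card_le_of_strictMonoOn {ι : Type*} [LinearOrder ι] {s : Finset ι} {f : ι → ℤ} {m : ι}
    (hm : m ∈ s) (hmax : ∀ i ∈ s, i ≤ m) (hpos : ∀ i ∈ s, 0 < f i) (hf : StrictMonoOn f s) :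
    (#s : ℤ) ≤ f m := by
  have hcard : #s ≤ #(Icc 1 (f m)) := by
    refine card_le_card_of_injOn f (fun i hi => ?_) hf.injOn
    simp only [coe_Icc, Set.mem_Icc]
    exact ⟨hpos i hi, hf.monotoneOn hi hm (hmax i hi)⟩
  rw [Int.card_Icc, add_sub_cancel_right] at hcard
  have := hpos m hm
  omega

def xStep (X : ℕ → ℤ) (j : ℕ) : ℤ := X (j + 1) - X j

def yDrop (Y : ℕ → ℤ) (j : ℕ) : ℤ := Y j - Y (j + 1)

lemma xStep_comp_sub (Y : ℕ → ℤ) {N j : ℕ} (hj : j < N) :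
    xStep (fun i => Y (N - i)) j = yDrop Y (N - 1 - j) := by
  simp only [xStep, yDrop]
  rw [show N - (j + 1) = N - 1 - j by omega, show N - j = N - 1 - j + 1 by omega]

lemma yDrop_comp_sub (X : ℕ → ℤ) {N j : ℕ} (hj : j < N) :
    yDrop (fun i => X (N - i)) j = xStep X (N - 1 - j) := by
  simp only [xStep, yDrop]
  rw [show N - (j + 1) = N - 1 - j by omega, show N - j = N - 1 - j + 1 by omega]

/-- `(X j, Y j)`, `j ≤ N`, are the vertices of a convex lattice chain running right and down,
any two of whose edges span a determinant at least `2`, and whose edge `k` (from vertex `k` to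
vertex `k + 1`) passes through the open positive quadrant. -/
structure IsSplitChain (N k : ℕ) (X Y : ℕ → ℤ) : Prop where
  xStep_pos : ∀ j < N, 0 < xStep X j
  yDrop_pos : ∀ j < N, 0 < yDrop Y j
  two_le_det : ∀ i j, i < j → j < N → 2 ≤ yDrop Y i * xStep X j - xStep X i * yDrop Y j
  start_neg : X 0 < 0
  end_neg : Y N < 0
  lt : k < N
  cross_x : 0 < X (k + 1)
  cross_y : 0 < Y k
  cross_det : 0 < X (k + 1) * Y k - X k * Y (k + 1)

namespace IsSplitChain

variable {N k : ℕ} {X Y : ℕ → ℤ}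

lemma xStep_ge_of_yDrop_eq_one (h : IsSplitChain N k X Y) {i j : ℕ} (hi : yDrop Y i = 1)
    (hij : i < j) (hj : j < N) : xStep X i * yDrop Y j + 2 ≤ xStep X j := by
  have := h.two_le_det i j hij hj
  rw [hi] at this
  linarith

lemma yDrop_ge_of_xStep_eq_one (h : IsSplitChain N k X Y) {i j : ℕ} (hj : xStep X j = 1)
    (hij : i < j) (hjN : j < N) : xStep X i * yDrop Y j + 2 ≤ yDrop Y i := by
  have := h.two_le_det i j hij hjN
  rw [hj] at this
  linarith

lemma xStep_eq_one_or_yDrop_eq_one (h : IsSplitChain N k X Y) (hx : X (k + 1) = 1)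
    (hy : Y k = 1) : xStep X k = 1 ∨ yDrop Y k = 1 := by
  have hdet := h.cross_det
  have hxk := h.xStep_pos k h.lt
  have hyk := h.yDrop_pos k h.lt
  unfold xStep yDrop at *
  rw [hx, hy] at hdet
  have : X k * Y (k + 1) = 0 := by
    have := mul_nonneg_of_nonpos_of_nonpos (a := X k) (b := Y (k + 1)) (by omega) (by omega)
    omega
  rcases mul_eq_zero.mp this with h0 | h0 <;> omega

lemma add_two_mul_le_add_card_yDrop_eq_one (h : IsSplitChain N k X Y) :
    Y k + 2 * k ≤ Y 0 + #{j ∈ range k | yDrop Y j = 1} := by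
  have := two_mul_card_le_sum_add_card_filter (range k) (yDrop Y)
    fun j hj => h.yDrop_pos j ((mem_range.mp hj).trans h.lt)
  rw [card_range, show ∑ j ∈ range k, yDrop Y j = Y 0 - Y k from sum_range_sub' Y k] at this
  linarith

lemma two_mul_add_one_add_le_of_steep (h : IsSplitChain N k X Y) {m : ℤ} (hm : 0 ≤ m)
    (hsteep : ∀ j, k ≤ j → j < N → m * yDrop Y j + 2 ≤ xStep X j) :
    2 * ((N : ℤ) - k) + 1 + m ≤ X N + Y k := by
  have hk := hsteep k le_rfl h.lt
  have hdet := h.cross_det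
  have hyk := h.yDrop_pos k h.lt
  rcases Nat.lt_or_ge (k + 1) N with hkN | hkN
  · have hclimb := add_mul_sub_le_of_le_sub (f := X) (c := 2) hkN fun j hj hjN => by
      have := hsteep j (by omega) hjN
      have := h.yDrop_pos j hjN
      unfold xStep at *
      nlinarith
    have hk1 := hsteep (k + 1) (by omega) hkN
    have hyk1 := h.yDrop_pos (k + 1) hkN
    have hx1 : m + 2 ≤ xStep X (k + 1) := by nlinarith
    unfold xStep at hx1
    push_cast at hclimb ⊢
    by_cases h3 : 3 ≤ X (k + 1) + Y k
    · linarith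
    have hx := h.cross_x
    have hy := h.cross_y
    -- `x ≥ 2` on edge `k` leaves `y = 1`, and then edge `k + 1` has `x ≥ m + 4`
    rcases h.xStep_eq_one_or_yDrop_eq_one (by omega) (by omega) with h1 | h1
    · nlinarith
    · have := h.xStep_ge_of_yDrop_eq_one h1 (Nat.lt_succ_self k) hkN
      unfold xStep at *
      nlinarith
  · obtain rfl : N = k + 1 := by have := h.lt; omega
    have hY := h.end_neg
    have hv := h.cross_y
    unfold xStep yDrop at *
    push_cast
    -- multiply `x ≥ m y + 2` by `-Y N ≥ 1` and compare with the crossing determinant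
    nlinarith [mul_nonneg (sub_nonneg.mpr hk) (neg_nonneg.mpr hY.le),
      mul_nonneg (mul_nonneg hm (show (0 : ℤ) ≤ -Y (k + 1) - 1 by omega)) hyk.le,
      mul_pos hv (neg_pos.mpr hY), sq_nonneg (Y k - 1)]

lemma two_mul_add_one_le_of_narrow_left (h : IsSplitChain N k X Y)
    (hL : ∃ j < k, yDrop Y j = 1) : 2 * (N : ℤ) + 1 ≤ X N + Y 0 := by
  set S := {j ∈ range k | yDrop Y j = 1} with hS
  have hne : S.Nonempty := by
    obtain ⟨j, hj, h1⟩ := hL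
    exact ⟨j, by simp [hS, hj, h1]⟩
  have hmem : ∀ i ∈ S, i < k ∧ yDrop Y i = 1 := fun i hi => by simpa [hS] using hi
  set j₀ := S.max' hne
  have hj₀ := hmem j₀ (S.max'_mem hne)
  have hcard : (#S : ℤ) ≤ xStep X j₀ :=
    card_le_of_strictMonoOn (S.max'_mem hne) (fun i hi => S.le_max' i hi)
      (fun i hi => h.xStep_pos i ((hmem i hi).1.trans h.lt))
      fun i hi j hj hij => by
        have := h.xStep_ge_of_yDrop_eq_one (hmem i hi).2 hij ((hmem j hj).1.trans h.lt)
        rw [(hmem j hj).2] at this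
        linarith
  have hright := h.two_mul_add_one_add_le_of_steep (h.xStep_pos j₀ (hj₀.1.trans h.lt)).le
    fun j hj hjN => by
      have := h.xStep_ge_of_yDrop_eq_one hj₀.2 (by omega) hjN
      linarith
  have hleft := h.add_two_mul_le_add_card_yDrop_eq_one
  rw [← hS] at hleft
  linarith

lemma two_mul_add_one_le_of_not_narrow (h : IsSplitChain N k X Y)
    (hL : ∀ j < k, yDrop Y j ≠ 1) (hR : ∀ j, k < j → j < N → xStep X j ≠ 1) :
    2 * (N : ℤ) + 1 ≤ X N + Y 0 := by
  have hleft (i : ℕ) (hi : i ≤ k) : Y i + 2 * i ≤ Y 0 := by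
    have := add_mul_sub_le_of_le_sub (f := fun j => -Y j) (c := 2) (Nat.zero_le i)
      fun j _ hj => by
        have := h.yDrop_pos j (by have := h.lt; omega)
        have := hL j (by omega)
        unfold yDrop at *
        omega
    push_cast at this
    linarith
  have hright (i : ℕ) (hi : k < i) (hiN : i ≤ N) : X i + 2 * ((N : ℤ) - i) ≤ X N :=
    add_mul_sub_le_of_le_sub hiN fun j hj hjN => by
      have := h.xStep_pos j hjN
      have := hR j (by omega) hjN
      unfold xStep at *
      omega
  have hx := h.cross_x
  have hy := h.cross_y
  have hk := h.lt
  by_cases h3 : 3 ≤ X (k + 1) + Y k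
  · have := hleft k le_rfl
    have := hright (k + 1) (by omega) hk
    push_cast at this
    linarith
  -- a tight crossing edge with `x = 1` starts on `X = 0`, so it has a predecessor, with `y ≥ 3`
  rcases h.xStep_eq_one_or_yDrop_eq_one (by omega) (by omega) with h1 | h1
  · obtain ⟨i, rfl⟩ : ∃ i, k = i + 1 := Nat.exists_eq_succ_of_ne_zero <| by
      rintro rfl
      have := h.start_neg
      unfold xStep at h1
      omega
    have := h.yDrop_ge_of_xStep_eq_one h1 (Nat.lt_succ_self i) hk
    have := h.yDrop_pos (i + 1) hk
    have := h.xStep_pos i (by omega)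
    have := hleft i (by omega)
    have := hright (i + 2) (by omega) hk
    unfold yDrop at *
    push_cast at *
    nlinarith
  · have hkN : k + 1 < N := by
      have := h.end_neg
      rcases Nat.lt_or_ge (k + 1) N with h' | h'
      · exact h'
      · obtain rfl : N = k + 1 := by omega
        unfold yDrop at h1
        omega
    have := h.xStep_ge_of_yDrop_eq_one h1 (Nat.lt_succ_self k) hkN
    have := h.yDrop_pos (k + 1) hkN
    have := h.xStep_pos k hk
    have := hleft k le_rfl
    have := hright (k + 2) (by omega) hkN
    unfold xStep at *
    push_cast at *
    nlinarith

lemma reverse (h : IsSplitChain N k X Y) :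
    IsSplitChain N (N - 1 - k) (fun j => Y (N - j)) (fun j => X (N - j)) where
  xStep_pos j hj := by rw [xStep_comp_sub Y hj]; exact h.yDrop_pos _ (by omega)
  yDrop_pos j hj := by rw [yDrop_comp_sub X hj]; exact h.xStep_pos _ (by omega)
  two_le_det i j hij hj := by
    rw [xStep_comp_sub Y hj, yDrop_comp_sub X hj, xStep_comp_sub Y (hij.trans hj),
      yDrop_comp_sub X (hij.trans hj)]
    have := h.two_le_det (N - 1 - j) (N - 1 - i) (by omega) (by omega)
    linarith
  start_neg := by simpa using h.end_neg
  end_neg := by simpa using h.start_neg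
  lt := by have := h.lt; omega
  cross_x := by rw [show N - (N - 1 - k + 1) = k by have := h.lt; omega]; exact h.cross_y
  cross_y := by rw [show N - (N - 1 - k) = k + 1 by have := h.lt; omega]; exact h.cross_x
  cross_det := by
    have := h.lt
    rw [show N - (N - 1 - k + 1) = k by omega, show N - (N - 1 - k) = k + 1 by omega]
    linarith [h.cross_det]

theorem two_mul_add_one_le (h : IsSplitChain N k X Y) : 2 * (N : ℤ) + 1 ≤ X N + Y 0 := by
  by_cases hL : ∃ j < k, yDrop Y j = 1
  · exact h.two_mul_add_one_le_of_narrow_left hL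
  by_cases hR : ∃ j, k < j ∧ j < N ∧ xStep X j = 1
  · obtain ⟨j, hkj, hjN, hj⟩ := hR
    have := h.reverse.two_mul_add_one_le_of_narrow_left ⟨N - 1 - j, by omega, by
      rw [yDrop_comp_sub X (by omega), show N - 1 - (N - 1 - j) = j by omega, hj]⟩
    simpa [add_comm] using this
  push Not at hL hR
  exact h.two_mul_add_one_le_of_not_narrow hL hR

end IsSplitChain

lemma IsZBasis.eq_of_smul_add_smul_eq {f₁ f₂ : ℤ × ℤ} (hf : IsZBasis f₁ f₂) {p q p' q' : ℤ}
    (h : p • f₁ + q • f₂ = p' • f₁ + q' • f₂) : p = p' ∧ q = q' := by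
  have h₁ := congrArg Prod.fst h
  have h₂ := congrArg Prod.snd h
  simp only [Prod.fst_add, Prod.snd_add, Prod.smul_fst, Prod.smul_snd, smul_eq_mul] at h₁ h₂
  have hd : f₁.1 * f₂.2 - f₁.2 * f₂.1 ≠ 0 := by rcases hf with hf | hf <;> omega
  have hp : (p - p') * (f₁.1 * f₂.2 - f₁.2 * f₂.1) = 0 := by
    linear_combination f₂.2 * h₁ - f₂.1 * h₂
  have hq : (q - q') * (f₁.1 * f₂.2 - f₁.2 * f₂.1) = 0 := by
    linear_combination f₁.1 * h₂ - f₁.2 * h₁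
  exact ⟨sub_eq_zero.mp ((mul_eq_zero.mp hp).resolve_right hd),
    sub_eq_zero.mp ((mul_eq_zero.mp hq).resolve_right hd)⟩

lemma IsZBasis.smul_add_smul {f₁ f₂ : ℤ × ℤ} (hf : IsZBasis f₁ f₂) {p q : ℤ × ℤ}
    (h : p.1 * q.2 - p.2 * q.1 = 1) : IsZBasis (p.1 • f₁ + p.2 • f₂) (q.1 • f₁ + q.2 • f₂) := by
  have hdet : (p.1 • f₁ + p.2 • f₂).1 * (q.1 • f₁ + q.2 • f₂).2
      - (p.1 • f₁ + p.2 • f₂).2 * (q.1 • f₁ + q.2 • f₂).1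
      = (p.1 * q.2 - p.2 * q.1) * (f₁.1 * f₂.2 - f₁.2 * f₂.1) := by
    simp only [Prod.fst_add, Prod.snd_add, Prod.smul_fst, Prod.smul_snd, smul_eq_mul]
    ring
  rw [IsZBasis, hdet, h, one_mul]
  exact hf

lemma IsZBasis.eq_top {u w : ℤ × ℤ} (hb : IsZBasis u w) {Γ : AddSubgroup (ℤ × ℤ)}
    (hu : u ∈ Γ) (hw : w ∈ Γ) : Γ = ⊤ := by
  set d := u.1 * w.2 - u.2 * w.1 with hd
  have hdd : d * d = 1 := by rcases hb with hb | hb <;> simp [hd, hb]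
  refine (AddSubgroup.eq_top_iff' Γ).mpr fun z => ?_
  have hz : z = (d * (z.1 * w.2 - z.2 * w.1)) • u + (d * (u.1 * z.2 - u.2 * z.1)) • w := by
    ext
    · simp only [Prod.fst_add, Prod.smul_fst, smul_eq_mul]
      linear_combination (-z.1) * hdd
    · simp only [Prod.snd_add, Prod.smul_snd, smul_eq_mul]
      linear_combination (-z.2) * hdd
  rw [hz]
  exact Γ.add_mem (Γ.zsmul_mem hu _) (Γ.zsmul_mem hw _)

namespace IsIntSlope

variable {f₁ f₂ : ℤ × ℤ} {N : ℕ} {v a : ℕ → ℤ × ℤ}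

lemma det_pos (hs : IsIntSlope f₁ f₂ N v a) {i j : ℕ} (hi : 1 ≤ i) (hij : i < j) (hj : j ≤ N) :
    0 < (a i).1 * (a j).2 - (a i).2 * (a j).1 := by
  induction j, hij using Nat.le_induction with
  | base => exact hs.2.2 i hi hj
  | succ m hm ih =>
    have hmid := hs.2.2 m (by omega) hj
    have h₁ := (hs.2.1 i hi (by omega)).1
    have h₂ := (hs.2.1 m (by omega) (by omega)).1
    have h₃ := (hs.2.1 (m + 1) (by omega) hj).1
    have hid : (a m).1 * ((a i).1 * (a (m + 1)).2 - (a i).2 * (a (m + 1)).1)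
        = (a (m + 1)).1 * ((a i).1 * (a m).2 - (a i).2 * (a m).1)
          + (a i).1 * ((a m).1 * (a (m + 1)).2 - (a m).2 * (a (m + 1)).1) := by ring
    have := ih (by omega)
    exact pos_of_mul_pos_right (hid ▸ by positivity) h₂.le

lemma two_le_det (hs : IsIntSlope f₁ f₂ N v a) (hf : IsZBasis f₁ f₂) {Γ : AddSubgroup (ℤ × ℤ)}
    (hΓ : Γ ≠ ⊤) (hmem : ∀ i ≤ N, v i ∈ Γ) {i j : ℕ} (hi : 1 ≤ i) (hij : i < j) (hj : j ≤ N) :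
    2 ≤ (a i).1 * (a j).2 - (a i).2 * (a j).1 := by
  have hpos := hs.det_pos hi hij hj
  suffices (a i).1 * (a j).2 - (a i).2 * (a j).1 ≠ 1 by omega
  intro h1
  have hedge (l : ℕ) (hl : 1 ≤ l) (hlN : l ≤ N) : (a l).1 • f₁ + (a l).2 • f₂ ∈ Γ :=
    hs.1 l hl hlN ▸ Γ.sub_mem (hmem l hlN) (hmem (l - 1) (by omega))
  exact hΓ ((hf.smul_add_smul h1).eq_top (hedge i hi (by omega)) (hedge j (by omega) hj))

lemma coords_sub {o : ℤ × ℤ} {c : ℕ → ℤ × ℤ} (hs : IsIntSlope f₁ f₂ N v a) (hf : IsZBasis f₁ f₂)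
    (hc : FrameCoords o f₁ f₂ N v c) {i : ℕ} (hi : 1 ≤ i) (hiN : i ≤ N) :
    (c i).1 - (c (i - 1)).1 = (a i).1 ∧ (c i).2 - (c (i - 1)).2 = (a i).2 := by
  refine hf.eq_of_smul_add_smul_eq ?_
  rw [← hs.1 i hi hiN, hc i hiN, hc (i - 1) (by omega)]
  module

end IsIntSlope

lemma pos_of_convexComb_pos {x₀ y₀ x₁ y₁ : ℤ} (hx : x₀ < x₁) (hy : y₁ < y₀) {t : ℝ}
    (ht₀ : 0 ≤ t) (ht₁ : t ≤ 1) (h₁ : 0 < (1 - t) * x₀ + t * x₁)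
    (h₂ : 0 < (1 - t) * y₀ + t * y₁) : 0 < x₁ ∧ 0 < y₀ ∧ 0 < x₁ * y₀ - x₀ * y₁ := by
  have hx' : (x₀ : ℝ) < x₁ := by exact_mod_cast hx
  have hy' : (y₁ : ℝ) < y₀ := by exact_mod_cast hy
  have hdet : ((x₁ * y₀ - x₀ * y₁ : ℤ) : ℝ)
      = (y₀ - y₁) * ((1 - t) * x₀ + t * x₁) + (x₁ - x₀) * ((1 - t) * y₀ + t * y₁) := by
    push_cast
    ring
  refine ⟨?_, ?_, ?_⟩
  · exact_mod_cast (show (0 : ℝ) < x₁ by nlinarith)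
  · exact_mod_cast (show (0 : ℝ) < y₀ by nlinarith)
  · have : (0 : ℝ) < ((x₁ * y₀ - x₀ * y₁ : ℤ) : ℝ) := by
      rw [hdet]
      exact add_pos (mul_pos (by linarith) h₁) (mul_pos (by linarith) h₂)
    exact_mod_cast this

lemma exists_isSplitChain {o f₁ f₂ : ℤ × ℤ} (hf : IsZBasis f₁ f₂) {N : ℕ} {v a c : ℕ → ℤ × ℤ}
    (hs : IsIntSlope f₁ f₂ N v a) (hc : FrameCoords o f₁ f₂ N v c) (hsplit : FrameSplits N c)
    {Γ : AddSubgroup (ℤ × ℤ)} (hΓ : Γ ≠ ⊤) (hmem : ∀ i ≤ N, v i ∈ Γ) :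
    ∃ k, IsSplitChain N k (fun j => (c j).1) (fun j => (c j).2) := by
  -- edge `j` of the chain is edge `j + 1` of the slope
  have hstep (j : ℕ) (hj : j < N) :
      xStep (fun j => (c j).1) j = (a (j + 1)).1 ∧ yDrop (fun j => (c j).2) j = -(a (j + 1)).2 := by
    have := hs.coords_sub hf hc (Nat.le_add_left 1 j) hj
    simp only [Nat.add_sub_cancel] at this
    simp only [xStep, yDrop]
    omega
  obtain ⟨h₀, h₀', -, hN, i, hi, hiN, t, ht₀, ht₁, h₁, h₂⟩ := hsplit
  obtain ⟨k, rfl⟩ : ∃ k, i = k + 1 := ⟨i - 1, by omega⟩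
  have hk := hstep k hiN
  have hak := hs.2.1 (k + 1) hi hiN
  simp only [Nat.add_sub_cancel] at h₁ h₂
  obtain ⟨hx, hy, hdet⟩ := pos_of_convexComb_pos (x₀ := (c k).1) (y₀ := (c k).2)
    (x₁ := (c (k + 1)).1) (y₁ := (c (k + 1)).2) (by simp only [xStep] at hk; omega)
    (by simp only [yDrop] at hk; omega) ht₀ ht₁ h₁ h₂
  refine ⟨k, fun j hj => ?_, fun j hj => ?_, fun i j hij hj => ?_, h₀, hN, hiN, hx, hy, hdet⟩
  · rw [(hstep j hj).1]
    exact (hs.2.1 (j + 1) (by omega) hj).1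
  · rw [(hstep j hj).2]
    linarith [(hs.2.1 (j + 1) (by omega) hj).2]
  · rw [(hstep i (hij.trans hj)).1, (hstep i (hij.trans hj)).2, (hstep j hj).1, (hstep j hj).2]
    have := hs.two_le_det hf hΓ hmem (Nat.le_add_left 1 i) (Nat.succ_lt_succ hij) hj
    linarith

lemma sum_Icc_sub_pred (f : ℕ → ℤ) (N : ℕ) : ∑ i ∈ Icc 1 N, (f i - f (i - 1)) = f N - f 0 := by
  induction N with
  | zero => simp
  | succ n ih => rw [sum_Icc_succ_top (by omega), ih, Nat.add_sub_cancel]; ring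

lemma sum_piHat {N : ℕ} {c : ℕ → ℤ × ℤ} (h₀ : (c 0).1 < 0) (h₀' : 0 < (c 0).2)
    (hN : 0 < (c N).1) (hN' : (c N).2 < 0) :
    ∑ i ∈ Icc 1 N, piHat c i = (c N).1 + (c 0).2 - 2 * N := by
  have h₁ := sum_Icc_sub_pred (fun i => max (c i).1 0) N
  have h₂ := sum_Icc_sub_pred (fun i => max (c i).2 0) N
  simp only [piHat, pi1, pi2, sum_sub_distrib, sum_add_distrib, sum_const, Nat.card_Icc,
    Nat.add_sub_cancel, nsmul_eq_mul] at h₁ h₂ ⊢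
  rw [max_eq_left hN.le, max_eq_right h₀.le] at h₁
  rw [max_eq_left h₀'.le, max_eq_right hN'.le] at h₂
  linarith

theorem stmt19_general (o f₁ f₂ : ℤ × ℤ) (hbasis : IsZBasis f₁ f₂)
    (N : ℕ) (v a c : ℕ → ℤ × ℤ)
    (hslope : IsIntSlope f₁ f₂ N v a)
    (hcoords : FrameCoords o f₁ f₂ N v c)
    (hsplit : FrameSplits N c)
    (Γ : AddSubgroup (ℤ × ℤ)) (hproper : Γ ≠ ⊤)
    (hmem : ∀ i ≤ N, v i ∈ Γ) :
    1 ≤ ∑ i ∈ Finset.Icc 1 N, piHat c i ∧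
    1 ≤ (c N).1 + (c 0).2 - 2 * (N : ℤ) := by
  obtain ⟨k, hchain⟩ := exists_isSplitChain hbasis hslope hcoords hsplit hproper hmem
  have hbound : 2 * (N : ℤ) + 1 ≤ (c N).1 + (c 0).2 := hchain.two_mul_add_one_le
  obtain ⟨h₀, h₀', hN, hN', -⟩ := hsplit
  rw [sum_piHat h₀ h₀' hN hN']
  constructor <;> linarith

/-- Lemma: if an integer frame splits an integer slope all of whose vertices belong to a
proper sublattice `Γ` of `ℤ²`, then `π̂(E) ≥ 1`; equivalently, `w₁ + v₂ - 2N ≥ 1`, where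
`(v₁, v₂)` and `(w₁, w₂)` are the frame coordinates of the endpoints. -/
theorem stmt19 (o f₁ f₂ : ℤ × ℤ) (hbasis : IsZBasis f₁ f₂)
    (N : ℕ) (hN : 1 ≤ N) (v a c : ℕ → ℤ × ℤ)
    (hslope : IsIntSlope f₁ f₂ N v a)
    (hcoords : FrameCoords o f₁ f₂ N v c)
    (hsplit : FrameSplits N c)
    (Γ : AddSubgroup (ℤ × ℤ)) (hΓ : IsSublatticeZ2 Γ) (hproper : Γ ≠ ⊤)
    (hmem : ∀ i ≤ N, v i ∈ Γ) :
    1 ≤ ∑ i ∈ Finset.Icc 1 N, piHat c i ∧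
    1 ≤ (c N).1 + (c 0).2 - 2 * (N : ℤ) :=
  stmt19_general o f₁ f₂ hbasis N v a c hslope hcoords hsplit Γ hproper hmem
end
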